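/- Let (H,α) be a monoidal Hom-Hopf algebra whose antipode S is bijective, (A,β) a right (H,α)-Hom-comodule algebra, and φ:H→A a total integral such that gφ(h)_(1)⊗φ(h)_(0) = φ(h)_(1)g⊗φ(h)_(0) for all g,h∈H (where ρ_A(φ(h))=φ(h)_(0)⊗φ(h)_(1)) and φ(h) lies in the center of A for all h∈H. Then the k-linear map θ:H⊗H→A defined by θ(g⊗h) = φ(hS⁻¹(g)) is a normalized (A,β)-integral. -/

import Mathlib

/- Preliminaries: monoidal Hom-structures (Caenepeel–Goyvaerts style), following the paper. -/

open TensorProduct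

noncomputable section

universe u v

/-- A monoidal Hom-algebra `(A, β)`. -/
structure HomAlgebra (k : Type v) (A : Type u) [CommRing k] [AddCommGroup A] [Module k A] where
  aut : A ≃ₗ[k] A
  mul : A →ₗ[k] A →ₗ[k] A
  one : A
  aut_mul : ∀ a b : A, aut (mul a b) = mul (aut a) (aut b)
  aut_one : aut one = one
  hom_assoc : ∀ a b c : A, mul (aut a) (mul b c) = mul (mul a b) (aut c)
  one_mul : ∀ a : A, mul one a = aut a
  mul_one : ∀ a : A, mul a one = aut a

/-- The bilinear map on tensor products induced by two bilinear maps: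
`(m ⊗ n, p ⊗ q) ↦ f m p ⊗ g n q`. -/
def biTensor {k : Type v} [CommRing k] {M N P Q R S : Type*}
    [AddCommGroup M] [Module k M] [AddCommGroup N] [Module k N]
    [AddCommGroup P] [Module k P] [AddCommGroup Q] [Module k Q]
    [AddCommGroup R] [Module k R] [AddCommGroup S] [Module k S]
    (f : M →ₗ[k] P →ₗ[k] R) (g : N →ₗ[k] Q →ₗ[k] S) :
    M ⊗[k] N →ₗ[k] P ⊗[k] Q →ₗ[k] R ⊗[k] S :=
  (TensorProduct.homTensorHomMap (RingHom.id k) P Q R S).comp (TensorProduct.map f g)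

/-- A monoidal Hom-Hopf algebra `(H, α, S)`. -/
structure HomHopfAlgebra (k : Type v) (H : Type u) [CommRing k] [AddCommGroup H] [Module k H]
    extends HomAlgebra k H where
  comul : H →ₗ[k] H ⊗[k] H
  counit : H →ₗ[k] k
  comul_aut : ∀ h, comul (aut h) = TensorProduct.map aut.toLinearMap aut.toLinearMap (comul h)
  counit_aut : ∀ h, counit (aut h) = counit h
  hom_coassoc : ∀ h, TensorProduct.map aut.symm.toLinearMap comul (comul h)
      = TensorProduct.assoc k H H H (TensorProduct.map comul aut.toLinearMap (comul h))
  counit_comul_left : ∀ h,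
      TensorProduct.lid k H (TensorProduct.map counit LinearMap.id (comul h)) = aut.symm h
  counit_comul_right : ∀ h,
      TensorProduct.rid k H (TensorProduct.map LinearMap.id counit (comul h)) = aut.symm h
  comul_mul : ∀ a b, comul (mul a b) = biTensor mul mul (comul a) (comul b)
  comul_one : comul one = one ⊗ₜ[k] one
  counit_mul : ∀ a b, counit (mul a b) = counit a * counit b
  counit_one : counit one = 1
  antipode : H →ₗ[k] H
  antipode_convolution : ∀ h,
      TensorProduct.lift mul (TensorProduct.map antipode LinearMap.id (comul h)) = counit h • one
  convolution_antipode : ∀ h,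
      TensorProduct.lift mul (TensorProduct.map LinearMap.id antipode (comul h)) = counit h • one
  antipode_aut : ∀ h, antipode (aut h) = aut (antipode h)

variable {k : Type v} [CommRing k]
variable {H : Type u} [AddCommGroup H] [Module k H]
variable {A : Type u} [AddCommGroup A] [Module k A]

/-- A right `(A, β)`-Hom-module `(M, μ)`. -/
structure HomModule (k : Type v) {A : Type u} [CommRing k] [AddCommGroup A] [Module k A]
    (Aa : HomAlgebra k A) (M : Type u) [AddCommGroup M] [Module k M] where
  aut : M ≃ₗ[k] M
  act : M →ₗ[k] A →ₗ[k] M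
  act_act : ∀ (m : M) (a b : A), act (act m a) (Aa.aut b) = act (aut m) (Aa.mul a b)
  act_one : ∀ m : M, act m Aa.one = aut m
  aut_act : ∀ (m : M) (a : A), aut (act m a) = act (aut m) (Aa.aut a)

/-- A right `(H, α)`-Hom-comodule `(M, μ)`. -/
structure HomComodule (k : Type v) {H : Type u} [CommRing k] [AddCommGroup H] [Module k H]
    (Hh : HomHopfAlgebra k H) (M : Type u) [AddCommGroup M] [Module k M] where
  aut : M ≃ₗ[k] M
  coact : M →ₗ[k] M ⊗[k] H
  coact_aut : ∀ m, coact (aut m) = TensorProduct.map aut.toLinearMap Hh.aut.toLinearMap (coact m)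
  counit_coact : ∀ m,
      TensorProduct.rid k M (TensorProduct.map LinearMap.id Hh.counit (coact m)) = aut.symm m
  hom_coassoc : ∀ m,
      TensorProduct.assoc k M H H (TensorProduct.map coact Hh.aut.symm.toLinearMap (coact m))
        = TensorProduct.map aut.symm.toLinearMap Hh.comul (coact m)

/-- A right `(H, α)`-Hom-comodule algebra `(A, β)`. -/
structure HomComoduleAlgebra (k : Type v) {H : Type u} [CommRing k] [AddCommGroup H] [Module k H]
    (Hh : HomHopfAlgebra k H) (A : Type u) [AddCommGroup A] [Module k A]
    extends HomAlgebra k A where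
  coact : A →ₗ[k] A ⊗[k] H
  coact_aut : ∀ a, coact (aut a) = TensorProduct.map aut.toLinearMap Hh.aut.toLinearMap (coact a)
  counit_coact : ∀ a,
      TensorProduct.rid k A (TensorProduct.map LinearMap.id Hh.counit (coact a)) = aut.symm a
  hom_coassoc : ∀ a,
      TensorProduct.assoc k A H H (TensorProduct.map coact Hh.aut.symm.toLinearMap (coact a))
        = TensorProduct.map aut.symm.toLinearMap Hh.comul (coact a)
  coact_mul : ∀ a b, coact (mul a b) = biTensor mul Hh.mul (coact a) (coact b)
  coact_one : coact one = one ⊗ₜ[k] Hh.one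

/-- A relative Hom-Hopf module `(M, μ)`. -/
structure RelHopfModule (k : Type v) {H A : Type u} [CommRing k]
    [AddCommGroup H] [Module k H] [AddCommGroup A] [Module k A]
    (Hh : HomHopfAlgebra k H) (AA : HomComoduleAlgebra k Hh A)
    (M : Type u) [AddCommGroup M] [Module k M] where
  aut : M ≃ₗ[k] M
  act : M →ₗ[k] A →ₗ[k] M
  act_act : ∀ (m : M) (a b : A), act (act m a) (AA.aut b) = act (aut m) (AA.mul a b)
  act_one : ∀ m : M, act m AA.one = aut m
  aut_act : ∀ (m : M) (a : A), aut (act m a) = act (aut m) (AA.aut a)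
  coact : M →ₗ[k] M ⊗[k] H
  coact_aut : ∀ m, coact (aut m) = TensorProduct.map aut.toLinearMap Hh.aut.toLinearMap (coact m)
  counit_coact : ∀ m,
      TensorProduct.rid k M (TensorProduct.map LinearMap.id Hh.counit (coact m)) = aut.symm m
  hom_coassoc : ∀ m,
      TensorProduct.assoc k M H H (TensorProduct.map coact Hh.aut.symm.toLinearMap (coact m))
        = TensorProduct.map aut.symm.toLinearMap Hh.comul (coact m)
  compat : ∀ (m : M) (a : A), coact (act m a) = biTensor act Hh.mul (coact m) (AA.coact a)

/-- The underlying Hom-module of a relative Hom-Hopf module. -/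
def RelHopfModule.toHomModule {Hh : HomHopfAlgebra k H} {AA : HomComoduleAlgebra k Hh A}
    {M : Type u} [AddCommGroup M] [Module k M] (T : RelHopfModule k Hh AA M) :
    HomModule k AA.toHomAlgebra M :=
  ⟨T.aut, T.act, T.act_act, T.act_one, T.aut_act⟩

/-- The underlying Hom-comodule of a relative Hom-Hopf module. -/
def RelHopfModule.toHomComodule {Hh : HomHopfAlgebra k H} {AA : HomComoduleAlgebra k Hh A}
    {M : Type u} [AddCommGroup M] [Module k M] (T : RelHopfModule k Hh AA M) :
    HomComodule k Hh M :=
  ⟨T.aut, T.coact, T.coact_aut, T.counit_coact, T.hom_coassoc⟩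

/-- A total integral `φ : (H, α) → (A, β)`. -/
structure TotalIntegral (k : Type v) {H A : Type u} [CommRing k]
    [AddCommGroup H] [Module k H] [AddCommGroup A] [Module k A]
    (Hh : HomHopfAlgebra k H) (AA : HomComoduleAlgebra k Hh A) where
  toFun : H →ₗ[k] A
  colinear : ∀ h, AA.coact (toFun h) = TensorProduct.map toFun LinearMap.id (Hh.comul h)
  commutes : ∀ h, toFun (Hh.aut h) = AA.aut (toFun h)
  normal : toFun Hh.one = AA.one

/-- The `(A, β)`-action on `M ⊗ H` of the right adjoint `G`:
`(m ⊗ h) · a = m · a₍₀₎ ⊗ h a₍₁₎`. -/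
def Gact {M : Type u} [AddCommGroup M] [Module k M]
    (Hh : HomHopfAlgebra k H) (AA : HomComoduleAlgebra k Hh A)
    (act : M →ₗ[k] A →ₗ[k] M) : (M ⊗[k] H) →ₗ[k] A →ₗ[k] (M ⊗[k] H) :=
  (biTensor act Hh.mul).compl₂ AA.coact

/-- The `(H, α)`-coaction on `M ⊗ H` of the right adjoint `G`:
`ρ(m ⊗ h) = (μ⁻¹(m) ⊗ h₍₁₎) ⊗ α(h₍₂₎)`. -/
def Gcoact {M : Type u} [AddCommGroup M] [Module k M]
    (Hh : HomHopfAlgebra k H) (autM : M ≃ₗ[k] M) :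
    M ⊗[k] H →ₗ[k] (M ⊗[k] H) ⊗[k] H :=
  ((TensorProduct.assoc k M H H).symm.toLinearMap).comp
    (TensorProduct.map autM.symm.toLinearMap
      ((TensorProduct.map LinearMap.id Hh.aut.toLinearMap).comp Hh.comul))

/-- The counit of the adjunction: `δ(n ⊗ h) = ε(h) n`. -/
def Gcounit (Hh : HomHopfAlgebra k H) (N : Type u) [AddCommGroup N] [Module k N] :
    N ⊗[k] H →ₗ[k] N :=
  (TensorProduct.rid k N).toLinearMap.comp (TensorProduct.map LinearMap.id Hh.counit)

/-- The map `λ_M : M ⊗ H → M`, `λ_M(m ⊗ h) = μ⁻¹(m₍₀₎) · φ(S(m₍₁₎) α(h))`. -/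
def lamMap {M : Type u} [AddCommGroup M] [Module k M]
    {Hh : HomHopfAlgebra k H} {AA : HomComoduleAlgebra k Hh A}
    (φ : H →ₗ[k] A) (T : RelHopfModule k Hh AA M) : M ⊗[k] H →ₗ[k] M :=
  (TensorProduct.lift T.act).comp
    ((TensorProduct.map T.aut.symm.toLinearMap
        (φ.comp ((TensorProduct.lift Hh.mul).comp
          (TensorProduct.map Hh.antipode Hh.aut.toLinearMap)))).comp
      (((TensorProduct.assoc k M H H).toLinearMap).comp
        (TensorProduct.map T.coact LinearMap.id)))

/-- The trace map `m ↦ m₍₀₎ · φ(S(m₍₁₎))` (for any Hom-action `act` and Hom-coaction `coact`). -/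
def traceMap {M : Type u} [AddCommGroup M] [Module k M]
    (S : H →ₗ[k] H) (φ : H →ₗ[k] A)
    (act : M →ₗ[k] A →ₗ[k] M) (coact : M →ₗ[k] M ⊗[k] H) : M →ₗ[k] M :=
  (TensorProduct.lift act).comp
    ((TensorProduct.map LinearMap.id (φ.comp S)).comp coact)

/-- A normalized `(A, β)`-integral `θ : H ⊗ H → A`. -/
structure NormalizedIntegral (k : Type v) {H A : Type u} [CommRing k]
    [AddCommGroup H] [Module k H] [AddCommGroup A] [Module k A]
    (Hh : HomHopfAlgebra k H) (AA : HomComoduleAlgebra k Hh A) where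
  θ : H ⊗[k] H →ₗ[k] A
  commutes : ∀ x, θ (TensorProduct.map Hh.aut.toLinearMap Hh.aut.toLinearMap x) = AA.aut (θ x)
  /-- `θ(α⁻¹(g) ⊗ h₍₁₎) ⊗ α(h₍₂₎) = β(θ(g₍₂₎ ⊗ α⁻¹(h))₍₀₎) ⊗ g₍₁₎ θ(g₍₂₎ ⊗ α⁻¹(h))₍₁₎`. -/
  cond1 : ∀ g h : H,
    TensorProduct.map θ Hh.aut.toLinearMap
        ((TensorProduct.assoc k H H H).symm (Hh.aut.symm g ⊗ₜ[k] Hh.comul h))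
      = TensorProduct.lift
          ((TensorProduct.homTensorHomMap (RingHom.id k) A H A H).comp
            (((TensorProduct.mk k (A →ₗ[k] A) (H →ₗ[k] H)) AA.aut.toLinearMap).comp Hh.mul))
          (TensorProduct.map LinearMap.id
            (AA.coact.comp (θ.comp ((TensorProduct.mk k H H).flip (Hh.aut.symm h))))
            (Hh.comul g))
  /-- `θ(h₍₁₎ ⊗ h₍₂₎) = ε(h) 1_A`. -/
  cond2 : ∀ h : H, θ (Hh.comul h) = Hh.counit h • AA.one
  /-- `β²(a₍₀₎₍₀₎) θ(α⁻¹(g) a₍₀₎₍₁₎ ⊗ α⁻¹(h) α⁻¹(a₍₁₎)) = θ(g ⊗ h) a`. -/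
  cond3 : ∀ (g h : H) (a : A),
    TensorProduct.lift AA.mul
      (TensorProduct.map (AA.aut.toLinearMap.comp AA.aut.toLinearMap)
          (θ.comp (TensorProduct.map (Hh.mul (Hh.aut.symm g)) (Hh.mul (Hh.aut.symm h))))
        (TensorProduct.assoc k A H H
          (TensorProduct.map AA.coact Hh.aut.symm.toLinearMap (AA.coact a))))
      = AA.mul (θ (g ⊗ₜ[k] h)) a

/-- The map `ν_M : M ⊗ H → M`, `ν_M(m ⊗ h) = μ(m₍₀₎) · θ(m₍₁₎ ⊗ α⁻¹(h))`. -/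
def nuMap {M : Type u} [AddCommGroup M] [Module k M]
    {Hh : HomHopfAlgebra k H} {AA : HomComoduleAlgebra k Hh A}
    (θ : H ⊗[k] H →ₗ[k] A) (T : RelHopfModule k Hh AA M) : M ⊗[k] H →ₗ[k] M :=
  (TensorProduct.lift T.act).comp
    ((TensorProduct.map T.aut.toLinearMap
        (θ.comp (TensorProduct.map LinearMap.id Hh.aut.symm.toLinearMap))).comp
      (((TensorProduct.assoc k M H H).toLinearMap).comp
        (TensorProduct.map T.coact LinearMap.id)))

/-- The `(A, β)`-action on `M ⊗ A`: `(m ⊗ a) · b = μ⁻¹(m) ⊗ a β(b)`. -/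
def MAact {M : Type u} [AddCommGroup M] [Module k M]
    {Hh : HomHopfAlgebra k H} (AA : HomComoduleAlgebra k Hh A)
    (autM : M ≃ₗ[k] M) : (M ⊗[k] A) →ₗ[k] A →ₗ[k] (M ⊗[k] A) :=
  (((TensorProduct.homTensorHomMap (RingHom.id k) M A M A).comp
    (((((TensorProduct.mk k (M →ₗ[k] M) (A →ₗ[k] A)) autM.symm.toLinearMap).comp
      AA.mul.flip).comp AA.aut.toLinearMap)))).flip

/-- The `(H, α)`-coaction on `M ⊗ A`: `ρ(m ⊗ a) = (m₍₀₎ ⊗ a₍₀₎) ⊗ m₍₁₎ a₍₁₎`. -/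
def MAcoact {M : Type u} [AddCommGroup M] [Module k M]
    (Hh : HomHopfAlgebra k H) (AA : HomComoduleAlgebra k Hh A)
    (coactM : M →ₗ[k] M ⊗[k] H) : (M ⊗[k] A) →ₗ[k] (M ⊗[k] A) ⊗[k] H :=
  (TensorProduct.map LinearMap.id (TensorProduct.lift Hh.mul)).comp
    ((TensorProduct.tensorTensorTensorComm k M H A H).toLinearMap.comp
      (TensorProduct.map coactM AA.coact))

/-- The map `ξ : H ⊗ A → A ⊗ H`, `ξ(h ⊗ a) = β(a₍₀₎) ⊗ α⁻¹(h) a₍₁₎`. -/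
def xiMap (Hh : HomHopfAlgebra k H) (AA : HomComoduleAlgebra k Hh A) :
    H ⊗[k] A →ₗ[k] A ⊗[k] H :=
  (TensorProduct.lift ((TensorProduct.homTensorHomMap (RingHom.id k) A H A H).comp
      (((((TensorProduct.mk k (A →ₗ[k] A) (H →ₗ[k] H)) AA.aut.toLinearMap).comp
        Hh.mul).comp Hh.aut.symm.toLinearMap)))).comp
    (TensorProduct.map LinearMap.id AA.coact)

/-- Morphisms of right `(A, β)`-Hom-modules. -/
def IsHomModuleHom {M N : Type u} [AddCommGroup M] [Module k M] [AddCommGroup N] [Module k N]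
    {Aa : HomAlgebra k A} (Mm : HomModule k Aa M) (Nn : HomModule k Aa N)
    (f : M →ₗ[k] N) : Prop :=
  (∀ m, f (Mm.aut m) = Nn.aut (f m)) ∧ ∀ m a, f (Mm.act m a) = Nn.act (f m) a

/-- Morphisms of right `(H, α)`-Hom-comodules. -/
def IsHomComoduleHom {M N : Type u} [AddCommGroup M] [Module k M] [AddCommGroup N] [Module k N]
    {Hh : HomHopfAlgebra k H} (Mm : HomComodule k Hh M) (Nn : HomComodule k Hh N)
    (f : M →ₗ[k] N) : Prop :=
  (∀ m, f (Mm.aut m) = Nn.aut (f m)) ∧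
    Nn.coact.comp f = (TensorProduct.map f LinearMap.id).comp Mm.coact

/-- Morphisms of relative Hom-Hopf modules. -/
def IsRelHopfHom {M N : Type u} [AddCommGroup M] [Module k M] [AddCommGroup N] [Module k N]
    {Hh : HomHopfAlgebra k H} {AA : HomComoduleAlgebra k Hh A}
    (Mm : RelHopfModule k Hh AA M) (Nn : RelHopfModule k Hh AA N)
    (f : M →ₗ[k] N) : Prop :=
  (∀ m, f (Mm.aut m) = Nn.aut (f m)) ∧
    (∀ m a, f (Mm.act m a) = Nn.act (f m) a) ∧
    Nn.coact.comp f = (TensorProduct.map f LinearMap.id).comp Mm.coact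

end

/-! ### Auxiliary development for Theorem 5.4 -/

noncomputable section Aux54

open TensorProduct LinearMap

universe u' v'

variable {k : Type v'} [CommRing k] {H A : Type u'}
  [AddCommGroup H] [Module k H] [AddCommGroup A] [Module k A]

namespace HomHopfAlgebra

variable (Hh : HomHopfAlgebra k H)

/-- multiplication as a map on the tensor product -/
def mm : H ⊗[k] H →ₗ[k] H := TensorProduct.lift Hh.mul

@[simp] lemma mm_tmul (a b : H) : Hh.mm (a ⊗ₜ[k] b) = Hh.mul a b := rfl

/-- `h ↦ ε(h) • 1` -/
def ee : H →ₗ[k] H := (LinearMap.toSpanSingleton k H Hh.one).comp Hh.counit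

@[simp] lemma ee_apply (h : H) : Hh.ee h = Hh.counit h • Hh.one := rfl

lemma aut_symm_one : Hh.aut.symm Hh.one = Hh.one := by
  conv_lhs => rw [← Hh.aut_one]
  exact Hh.aut.symm_apply_apply _

lemma antipode_aut_symm (h : H) : Hh.antipode (Hh.aut.symm h) = Hh.aut.symm (Hh.antipode h) := by
  apply Hh.aut.injective
  rw [← Hh.antipode_aut, Hh.aut.apply_symm_apply, Hh.aut.apply_symm_apply]

lemma counit_aut_symm (h : H) : Hh.counit (Hh.aut.symm h) = Hh.counit h := by
  conv_rhs => rw [← Hh.aut.apply_symm_apply h, Hh.counit_aut]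

/-- `K = m ∘ (id ⊗ S) ∘ Δ  =  ηε` -/
lemma conv_right : Hh.mm.comp ((TensorProduct.map LinearMap.id Hh.antipode).comp Hh.comul)
    = Hh.ee := by
  ext h; exact Hh.convolution_antipode h

/-- `m ∘ (S ⊗ id) ∘ Δ  =  ηε` -/
lemma conv_left : Hh.mm.comp ((TensorProduct.map Hh.antipode LinearMap.id).comp Hh.comul)
    = Hh.ee := by
  ext h; exact Hh.antipode_convolution h

lemma map_counit_comul (h : H) :
    TensorProduct.map LinearMap.id Hh.counit (Hh.comul h)
      = Hh.aut.symm h ⊗ₜ[k] (1 : k) := by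
  have := Hh.counit_comul_right h
  apply_fun (TensorProduct.rid k H) using (TensorProduct.rid k H).injective
  rw [this]; simp

lemma counit_map_comul (h : H) :
    TensorProduct.map Hh.counit LinearMap.id (Hh.comul h)
      = (1 : k) ⊗ₜ[k] Hh.aut.symm h := by
  have := Hh.counit_comul_left h
  apply_fun (TensorProduct.lid k H) using (TensorProduct.lid k H).injective
  rw [this]; simp

/-- nested `map` collapse -/
theorem tpmm {M N P Q P' Q' : Type*}
    [AddCommGroup M] [Module k M] [AddCommGroup N] [Module k N]
    [AddCommGroup P] [Module k P] [AddCommGroup Q] [Module k Q]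
    [AddCommGroup P'] [Module k P'] [AddCommGroup Q'] [Module k Q']
    (f₁ : M →ₗ[k] P) (f₂ : P →ₗ[k] P') (g₁ : N →ₗ[k] Q) (g₂ : Q →ₗ[k] Q')
    (x : M ⊗[k] N) :
    TensorProduct.map f₂ g₂ (TensorProduct.map f₁ g₁ x)
      = TensorProduct.map (f₂.comp f₁) (g₂.comp g₁) x := by
  rw [TensorProduct.map_comp]; rfl

lemma counit_comul_right' (h : H) :
    (TensorProduct.rid k H).toLinearMap
      (TensorProduct.map LinearMap.id Hh.counit (Hh.comul h)) = Hh.aut.symm h :=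
  Hh.counit_comul_right h

lemma counit_comul_left' (h : H) :
    (TensorProduct.lid k H).toLinearMap
      (TensorProduct.map Hh.counit LinearMap.id (Hh.comul h)) = Hh.aut.symm h :=
  Hh.counit_comul_left h

/-- `m ∘ (ηε ⊗ L) = α∘L∘lid∘(ε⊗id)` -/
lemma mm_ee_left (L : H →ₗ[k] H) :
    Hh.mm.comp (TensorProduct.map Hh.ee L)
      = (Hh.aut.toLinearMap.comp L).comp
          ((TensorProduct.lid k H).toLinearMap.comp
            (TensorProduct.map Hh.counit LinearMap.id)) := by
  apply TensorProduct.ext'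
  intro u v
  simp only [LinearMap.comp_apply, TensorProduct.map_tmul, ee_apply, mm_tmul,
    LinearEquiv.coe_coe, TensorProduct.lid_tmul, LinearMap.id_coe, id_eq, map_smul,
    LinearMap.smul_apply]
  rw [Hh.one_mul]

/-- `m ∘ (L ⊗ ηε) = α∘L∘rid∘(id⊗ε)` -/
lemma mm_ee_right (L : H →ₗ[k] H) :
    Hh.mm.comp (TensorProduct.map L Hh.ee)
      = (Hh.aut.toLinearMap.comp L).comp
          ((TensorProduct.rid k H).toLinearMap.comp
            (TensorProduct.map LinearMap.id Hh.counit)) := by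
  apply TensorProduct.ext'
  intro u v
  simp only [LinearMap.comp_apply, TensorProduct.map_tmul, ee_apply, mm_tmul,
    LinearEquiv.coe_coe, TensorProduct.rid_tmul, LinearMap.id_coe, id_eq, map_smul,
    LinearMap.smul_apply]
  rw [Hh.mul_one]

/-- coassociativity, rearranged -/
lemma coassoc' (x : H) :
    TensorProduct.map LinearMap.id Hh.comul (Hh.comul x)
      = TensorProduct.map Hh.aut.toLinearMap LinearMap.id
          ((TensorProduct.assoc k H H H)
            (TensorProduct.map Hh.comul Hh.aut.toLinearMap (Hh.comul x))) := by
  rw [← Hh.hom_coassoc x, tpmm]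
  have e1 : Hh.aut.toLinearMap.comp Hh.aut.symm.toLinearMap = LinearMap.id := by
    ext h; simp
  have e2 : LinearMap.id.comp Hh.comul = Hh.comul := LinearMap.id_comp _
  rw [e1, e2]

/-- Route computation: `α ∘ α ∘ S = S`. -/
lemma aut_aut_antipode (x : H) : Hh.aut (Hh.aut (Hh.antipode x)) = Hh.antipode x := by
  set α := Hh.aut with hα
  set S := Hh.antipode with hS
  set K : H →ₗ[k] H := Hh.mm.comp ((TensorProduct.map LinearMap.id S).comp Hh.comul) with hK
  set P : H →ₗ[k] H :=
    Hh.mm.comp ((TensorProduct.map (α.toLinearMap.comp S) (α.toLinearMap.comp K)).comp Hh.comul)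
    with hP
  have hαe : α.toLinearMap.comp Hh.ee = Hh.ee := by
    ext h; simp [hα, Hh.aut_one]
  -- Route 1 : P x = α (S x)
  have route1 : P x = α (S x) := by
    have hKe : K = Hh.ee := Hh.conv_right
    have h1 : P x = (Hh.mm.comp (TensorProduct.map (α.toLinearMap.comp S) Hh.ee))
        (Hh.comul x) := by
      rw [hP, hKe]; simp only [LinearMap.comp_apply, hαe]
    rw [h1, Hh.mm_ee_right]
    simp only [LinearMap.comp_apply, LinearEquiv.coe_coe]
    rw [Hh.counit_comul_right x, Hh.antipode_aut_symm]
    exact congrArg α (α.apply_symm_apply _)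
  -- Route 2 : P x = α (α (α (S x)))
  have route2 : P x = α (α (α (S x))) := by
    set Q₀ : H ⊗[k] (H ⊗[k] H) →ₗ[k] H :=
      Hh.mm.comp (TensorProduct.map (α.toLinearMap.comp S)
        (α.toLinearMap.comp (Hh.mm.comp (TensorProduct.map LinearMap.id S)))) with hQ₀
    have step1 : P x = Q₀ (TensorProduct.map LinearMap.id Hh.comul (Hh.comul x)) := by
      rw [hP, hQ₀]
      simp only [LinearMap.comp_apply]
      rw [tpmm]
      have e1 : (α.toLinearMap.comp S).comp LinearMap.id = α.toLinearMap.comp S :=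
        LinearMap.comp_id _
      have e2 : (α.toLinearMap.comp (Hh.mm.comp (TensorProduct.map LinearMap.id
          S))).comp Hh.comul = α.toLinearMap.comp K := by ext h; rfl
      rw [e1, e2]
    rw [step1, Hh.coassoc' x]
    set Q₂ : (H ⊗[k] H) ⊗[k] H →ₗ[k] H :=
      Hh.mm.comp (TensorProduct.map
        (α.toLinearMap.comp (Hh.mm.comp (TensorProduct.map S LinearMap.id)))
        ((α.toLinearMap.comp α.toLinearMap).comp S)) with hQ₂
    have step3 : (Q₀.comp (TensorProduct.map α.toLinearMap LinearMap.id)).comp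
        (TensorProduct.assoc k H H H).toLinearMap = Q₂ := by
      apply TensorProduct.ext_threefold
      intro u v w
      simp only [LinearMap.comp_apply, LinearEquiv.coe_coe, TensorProduct.assoc_tmul,
        TensorProduct.map_tmul, hQ₀, hQ₂, mm_tmul, LinearMap.id_coe, id_eq]
      rw [Hh.antipode_aut, Hh.aut_mul, Hh.hom_assoc, ← Hh.aut_mul]
    have step3' : Q₀ (TensorProduct.map α.toLinearMap LinearMap.id
        ((TensorProduct.assoc k H H H)
          (TensorProduct.map Hh.comul α.toLinearMap (Hh.comul x))))
        = Q₂ (TensorProduct.map Hh.comul α.toLinearMap (Hh.comul x)) := by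
      rw [← step3]; rfl
    rw [step3']
    have hconv : (α.toLinearMap.comp
        (Hh.mm.comp (TensorProduct.map S LinearMap.id))).comp Hh.comul = Hh.ee := by
      have h2 : (α.toLinearMap.comp (Hh.mm.comp (TensorProduct.map S LinearMap.id))).comp
          Hh.comul = α.toLinearMap.comp (Hh.mm.comp ((TensorProduct.map S
            LinearMap.id).comp Hh.comul)) := by
        ext h; rfl
      rw [h2, Hh.conv_left, hαe]
    have step4 : Q₂ (TensorProduct.map Hh.comul α.toLinearMap (Hh.comul x))
        = (Hh.mm.comp (TensorProduct.map Hh.ee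
            (((α.toLinearMap.comp α.toLinearMap).comp S).comp α.toLinearMap)))
            (Hh.comul x) := by
      rw [hQ₂]
      simp only [LinearMap.comp_apply]
      rw [tpmm, hconv]
    rw [step4, Hh.mm_ee_left]
    simp only [LinearMap.comp_apply, LinearEquiv.coe_coe]
    rw [Hh.counit_comul_left x, α.apply_symm_apply]
  rw [route1] at route2
  exact α.injective route2.symm

section Inv

variable {Sinv : H →ₗ[k] H}

/-- with a bijective antipode, `α² = id` -/
lemma aut_aut (hS₁ : ∀ h, Hh.antipode (Sinv h) = h) (x : H) :
    Hh.aut (Hh.aut x) = x := by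
  conv_lhs => rw [← hS₁ x]
  rw [Hh.aut_aut_antipode, hS₁]

lemma antipode_inj (hS₂ : ∀ h, Sinv (Hh.antipode h) = h) {x y : H}
    (h : Hh.antipode x = Hh.antipode y) : x = y := by
  rw [← hS₂ x, ← hS₂ y, h]

lemma sinv_aut (hS₁ : ∀ h, Hh.antipode (Sinv h) = h)
    (hS₂ : ∀ h, Sinv (Hh.antipode h) = h) (h : H) :
    Sinv (Hh.aut h) = Hh.aut (Sinv h) := by
  conv_lhs => rw [← hS₁ h]
  rw [← Hh.antipode_aut, hS₂]

end Inv

lemma antipode_one : Hh.antipode Hh.one = Hh.one := by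
  have h0 := Hh.antipode_convolution Hh.one
  rw [Hh.comul_one, Hh.counit_one, one_smul] at h0
  simp only [TensorProduct.map_tmul, LinearMap.id_coe, id_eq, TensorProduct.lift.tmul] at h0
  rw [Hh.mul_one] at h0
  have := congrArg Hh.aut.symm h0
  rwa [Hh.aut.symm_apply_apply, Hh.aut_symm_one] at this

lemma counit_antipode (h : H) : Hh.counit (Hh.antipode h) = Hh.counit h := by
  have E : Hh.counit.comp (Hh.mm.comp (TensorProduct.map LinearMap.id Hh.antipode))
      = (TensorProduct.lid k k).toLinearMap.comp
          (TensorProduct.map Hh.counit (Hh.counit.comp Hh.antipode)) := by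
    apply TensorProduct.ext'
    intro u v
    simp only [LinearMap.comp_apply, TensorProduct.map_tmul, mm_tmul, LinearMap.id_coe,
      id_eq, LinearEquiv.coe_coe, TensorProduct.lid_tmul, smul_eq_mul]
    exact Hh.counit_mul u (Hh.antipode v)
  have h1 := congrArg (fun t => t (Hh.comul h)) E
  simp only [LinearMap.comp_apply] at h1
  rw [show Hh.mm (TensorProduct.map LinearMap.id Hh.antipode (Hh.comul h))
    = Hh.counit h • Hh.one from Hh.convolution_antipode h] at h1
  simp only [map_smul, Hh.counit_one, smul_eq_mul, mul_one] at h1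
  have h2 : TensorProduct.map Hh.counit (Hh.counit.comp Hh.antipode) (Hh.comul h)
      = TensorProduct.map LinearMap.id (Hh.counit.comp Hh.antipode)
          (TensorProduct.map Hh.counit LinearMap.id (Hh.comul h)) := by
    rw [tpmm, LinearMap.id_comp, LinearMap.comp_id]
  rw [h2, Hh.counit_map_comul] at h1
  simp only [TensorProduct.map_tmul, LinearMap.id_coe, id_eq, LinearMap.comp_apply,
    LinearEquiv.coe_coe, TensorProduct.lid_tmul, one_smul] at h1
  rw [Hh.antipode_aut_symm, Hh.counit_aut_symm] at h1
  exact h1.symm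

section Inv2

variable {Sinv : H →ₗ[k] H}

lemma sinv_one (hS₂ : ∀ h, Sinv (Hh.antipode h) = h) : Sinv Hh.one = Hh.one := by
  conv_lhs => rw [← Hh.antipode_one]
  rw [hS₂]

lemma counit_sinv (hS₁ : ∀ h, Hh.antipode (Sinv h) = h) (h : H) :
    Hh.counit (Sinv h) = Hh.counit h := by
  rw [← Hh.counit_antipode (Sinv h), hS₁]

end Inv2


/-! #### The monoidal Hom-algebra / coalgebra structure on `H ⊗ H` -/

/-- `γ = α ⊗ α` -/
def gam : H ⊗[k] H →ₗ[k] H ⊗[k] H :=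
  TensorProduct.map Hh.aut.toLinearMap Hh.aut.toLinearMap

/-- `γ⁻¹ = α⁻¹ ⊗ α⁻¹` -/
def gamS : H ⊗[k] H →ₗ[k] H ⊗[k] H :=
  TensorProduct.map Hh.aut.symm.toLinearMap Hh.aut.symm.toLinearMap

/-- componentwise multiplication on `H ⊗ H` -/
def mul2 : H ⊗[k] H →ₗ[k] H ⊗[k] H →ₗ[k] H ⊗[k] H := biTensor Hh.mul Hh.mul

def mm2 : (H ⊗[k] H) ⊗[k] (H ⊗[k] H) →ₗ[k] H ⊗[k] H := TensorProduct.lift Hh.mul2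

def one2 : H ⊗[k] H := Hh.one ⊗ₜ[k] Hh.one

/-- comultiplication on `H ⊗ H` -/
def comul2 : H ⊗[k] H →ₗ[k] (H ⊗[k] H) ⊗[k] (H ⊗[k] H) :=
  (TensorProduct.tensorTensorTensorComm k H H H H).toLinearMap.comp (TensorProduct.map Hh.comul Hh.comul)

/-- counit on `H ⊗ H` -/
def ee2 : H ⊗[k] H →ₗ[k] k :=
  (TensorProduct.lid k k).toLinearMap.comp (TensorProduct.map Hh.counit Hh.counit)

/-- `c ↦ ε₂(c) • 1` -/
def EE2 : H ⊗[k] H →ₗ[k] H := (LinearMap.toSpanSingleton k H Hh.one).comp Hh.ee2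

/-- `h ↦ ε(h) • (1 ⊗ 1)` -/
def EE4 : H →ₗ[k] H ⊗[k] H :=
  (LinearMap.toSpanSingleton k (H ⊗[k] H) Hh.one2).comp Hh.counit

@[simp] lemma gam_tmul (a b : H) : Hh.gam (a ⊗ₜ[k] b) = Hh.aut a ⊗ₜ[k] Hh.aut b := rfl
@[simp] lemma gamS_tmul (a b : H) :
    Hh.gamS (a ⊗ₜ[k] b) = Hh.aut.symm a ⊗ₜ[k] Hh.aut.symm b := rfl
@[simp] lemma ttc4_tmul (x y : H ⊗[k] H) :
    (TensorProduct.tensorTensorTensorComm k H H H H).toLinearMap (x ⊗ₜ[k] y)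
      = TensorProduct.tensorTensorTensorComm k H H H H (x ⊗ₜ[k] y) := rfl
@[simp] lemma mul2_tmul (a b c d : H) :
    Hh.mul2 (a ⊗ₜ[k] b) (c ⊗ₜ[k] d) = Hh.mul a c ⊗ₜ[k] Hh.mul b d := by
  simp [mul2, biTensor]
@[simp] lemma mm2_tmul (x y : H ⊗[k] H) : Hh.mm2 (x ⊗ₜ[k] y) = Hh.mul2 x y := rfl
@[simp] lemma comul2_tmul (u v : H) :
    Hh.comul2 (u ⊗ₜ[k] v) = (TensorProduct.tensorTensorTensorComm k H H H H).toLinearMap (Hh.comul u ⊗ₜ[k] Hh.comul v) := rfl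
@[simp] lemma ee2_tmul (u v : H) : Hh.ee2 (u ⊗ₜ[k] v) = Hh.counit u * Hh.counit v := by
  simp [ee2, smul_eq_mul]
@[simp] lemma EE2_tmul (u v : H) :
    Hh.EE2 (u ⊗ₜ[k] v) = (Hh.counit u * Hh.counit v) • Hh.one := by
  simp [EE2]
@[simp] lemma EE4_apply (h : H) : Hh.EE4 h = Hh.counit h • Hh.one2 := rfl

lemma aut_symm_mul (a b : H) :
    Hh.aut.symm (Hh.mul a b) = Hh.mul (Hh.aut.symm a) (Hh.aut.symm b) := by
  apply Hh.aut.injective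
  rw [Hh.aut.apply_symm_apply, Hh.aut_mul, Hh.aut.apply_symm_apply, Hh.aut.apply_symm_apply]

lemma comul_aut_symm (h : H) :
    Hh.comul (Hh.aut.symm h) = Hh.gamS (Hh.comul h) := by
  have h1 : Hh.comul (Hh.aut (Hh.aut.symm h)) = Hh.gam (Hh.comul (Hh.aut.symm h)) :=
    Hh.comul_aut _
  rw [Hh.aut.apply_symm_apply] at h1
  rw [h1, gamS, gam, tpmm]
  have e : Hh.aut.symm.toLinearMap.comp Hh.aut.toLinearMap = LinearMap.id := by ext z; simp
  rw [e]
  simp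

lemma comm_map (f g : H →ₗ[k] H) (x : H ⊗[k] H) :
    TensorProduct.comm k H H (TensorProduct.map f g x)
      = TensorProduct.map g f (TensorProduct.comm k H H x) := by
  have : (TensorProduct.comm k H H).toLinearMap.comp (TensorProduct.map f g)
      = (TensorProduct.map g f).comp (TensorProduct.comm k H H).toLinearMap := by
    apply TensorProduct.ext'; intro a b; simp
  simpa using LinearMap.congr_fun this x

/-- Hom-algebra structure on `H ⊗ H`, pointwise -/
lemma mul2_one2 (x : H ⊗[k] H) : Hh.mul2 x Hh.one2 = Hh.gam x := by
  induction x using TensorProduct.induction_on with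
  | zero => simp
  | tmul a b => simp [one2, Hh.mul_one]
  | add x y hx hy => simp [map_add, LinearMap.add_apply, hx, hy]

lemma one2_mul2 (x : H ⊗[k] H) : Hh.mul2 Hh.one2 x = Hh.gam x := by
  induction x using TensorProduct.induction_on with
  | zero => simp
  | tmul a b => simp [one2, Hh.one_mul]
  | add x y hx hy => simp [map_add, hx, hy]

lemma gam_mul2 (x y : H ⊗[k] H) :
    Hh.gam (Hh.mul2 x y) = Hh.mul2 (Hh.gam x) (Hh.gam y) := by
  induction x using TensorProduct.induction_on with
  | zero => simp
  | tmul a b =>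
    induction y using TensorProduct.induction_on with
    | zero => simp
    | tmul c d => simp [Hh.aut_mul]
    | add y z hy hz => simp only [map_add, hy, hz]
  | add x z hx hz => simp only [map_add, LinearMap.add_apply, hx, hz]

lemma hom_assoc2 (x y z : H ⊗[k] H) :
    Hh.mul2 (Hh.gam x) (Hh.mul2 y z) = Hh.mul2 (Hh.mul2 x y) (Hh.gam z) := by
  induction x using TensorProduct.induction_on with
  | zero => simp
  | tmul a b =>
    induction y using TensorProduct.induction_on with
    | zero => simp
    | tmul c d =>
      induction z using TensorProduct.induction_on with
      | zero => simp
      | tmul e f => simp [Hh.hom_assoc]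
      | add z w hz hw => simp only [map_add, hz, hw]
    | add y w hy hw => simp only [map_add, LinearMap.add_apply, hy, hw]
  | add x w hx hw => simp only [map_add, LinearMap.add_apply, hx, hw]

lemma gam_one2 : Hh.gam Hh.one2 = Hh.one2 := by simp [one2, Hh.aut_one]

lemma gam_gamS (x : H ⊗[k] H) : Hh.gam (Hh.gamS x) = x := by
  rw [gam, gamS, tpmm]
  have e : Hh.aut.toLinearMap.comp Hh.aut.symm.toLinearMap = LinearMap.id := by ext z; simp
  rw [e]; simp

lemma gamS_gam (x : H ⊗[k] H) : Hh.gamS (Hh.gam x) = x := by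
  rw [gam, gamS, tpmm]
  have e : Hh.aut.symm.toLinearMap.comp Hh.aut.toLinearMap = LinearMap.id := by ext z; simp
  rw [e]; simp

/-- `Δ` is multiplicative, map form -/
lemma comul_mm : Hh.comul.comp Hh.mm = (TensorProduct.map Hh.mm Hh.mm).comp Hh.comul2 := by
  have aux : ∀ x y : H ⊗[k] H, Hh.mul2 x y
      = TensorProduct.map Hh.mm Hh.mm ((TensorProduct.tensorTensorTensorComm k H H H H).toLinearMap (x ⊗ₜ[k] y)) := by
    intro x y
    induction x using TensorProduct.induction_on with
    | zero => simp
    | tmul a b =>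
      induction y using TensorProduct.induction_on with
      | zero => simp
      | tmul c d => simp [TensorProduct.tensorTensorTensorComm_tmul]
      | add y z hy hz => simp only [map_add, tmul_add, hy, hz]
    | add x z hx hz => simp only [map_add, LinearMap.add_apply, add_tmul, hx, hz]
  apply TensorProduct.ext'
  intro u v
  simp only [LinearMap.comp_apply, mm_tmul, comul2_tmul]
  rw [Hh.comul_mul u v, ← aux]
  rfl

lemma ee_mm : Hh.ee.comp Hh.mm = Hh.EE2 := by
  apply TensorProduct.ext'
  intro u v
  simp only [LinearMap.comp_apply, mm_tmul, ee_apply, EE2_tmul]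
  rw [Hh.counit_mul]

/-- left counit law on `H ⊗ H` -/
lemma ee2_comul2_left :
    (TensorProduct.lid k (H ⊗[k] H)).toLinearMap.comp
        ((TensorProduct.map Hh.ee2 LinearMap.id).comp Hh.comul2) = Hh.gamS := by
  have PL : (TensorProduct.lid k (H ⊗[k] H)).toLinearMap.comp
      ((TensorProduct.map Hh.ee2 LinearMap.id).comp (TensorProduct.tensorTensorTensorComm k H H H H).toLinearMap)
      = TensorProduct.map
          ((TensorProduct.lid k H).toLinearMap.comp
            (TensorProduct.map Hh.counit LinearMap.id))
          ((TensorProduct.lid k H).toLinearMap.comp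
            (TensorProduct.map Hh.counit LinearMap.id)) := by
    apply TensorProduct.ext_fourfold'
    intro a b c d
    simp only [LinearMap.comp_apply, ttc4_tmul, TensorProduct.tensorTensorTensorComm_tmul,
      TensorProduct.map_tmul, ee2_tmul, LinearMap.id_coe, id_eq, LinearEquiv.coe_coe,
      TensorProduct.lid_tmul]
    simp [TensorProduct.tmul_smul, TensorProduct.smul_tmul', smul_smul, mul_comm]
  apply TensorProduct.ext'
  intro u v
  have h1 : ((TensorProduct.lid k (H ⊗[k] H)).toLinearMap.comp
      ((TensorProduct.map Hh.ee2 LinearMap.id).comp Hh.comul2)) (u ⊗ₜ[k] v)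
      = ((TensorProduct.lid k (H ⊗[k] H)).toLinearMap.comp
        ((TensorProduct.map Hh.ee2 LinearMap.id).comp (TensorProduct.tensorTensorTensorComm k H H H H).toLinearMap))
          (Hh.comul u ⊗ₜ[k] Hh.comul v) := rfl
  rw [h1, PL]
  simp only [TensorProduct.map_tmul, LinearMap.comp_apply]
  rw [Hh.counit_comul_left' u, Hh.counit_comul_left' v]
  rfl

/-- right counit law on `H ⊗ H` -/
lemma ee2_comul2_right :
    (TensorProduct.rid k (H ⊗[k] H)).toLinearMap.comp
        ((TensorProduct.map LinearMap.id Hh.ee2).comp Hh.comul2) = Hh.gamS := by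
  have PL : (TensorProduct.rid k (H ⊗[k] H)).toLinearMap.comp
      ((TensorProduct.map LinearMap.id Hh.ee2).comp (TensorProduct.tensorTensorTensorComm k H H H H).toLinearMap)
      = TensorProduct.map
          ((TensorProduct.rid k H).toLinearMap.comp
            (TensorProduct.map LinearMap.id Hh.counit))
          ((TensorProduct.rid k H).toLinearMap.comp
            (TensorProduct.map LinearMap.id Hh.counit)) := by
    apply TensorProduct.ext_fourfold'
    intro a b c d
    simp only [LinearMap.comp_apply, ttc4_tmul, TensorProduct.tensorTensorTensorComm_tmul,
      TensorProduct.map_tmul, ee2_tmul, LinearMap.id_coe, id_eq, LinearEquiv.coe_coe,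
      TensorProduct.rid_tmul]
    simp [TensorProduct.tmul_smul, TensorProduct.smul_tmul', smul_smul, mul_comm]
  apply TensorProduct.ext'
  intro u v
  have h1 : ((TensorProduct.rid k (H ⊗[k] H)).toLinearMap.comp
      ((TensorProduct.map LinearMap.id Hh.ee2).comp Hh.comul2)) (u ⊗ₜ[k] v)
      = ((TensorProduct.rid k (H ⊗[k] H)).toLinearMap.comp
        ((TensorProduct.map LinearMap.id Hh.ee2).comp (TensorProduct.tensorTensorTensorComm k H H H H).toLinearMap))
          (Hh.comul u ⊗ₜ[k] Hh.comul v) := rfl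
  rw [h1, PL]
  simp only [TensorProduct.map_tmul, LinearMap.comp_apply]
  rw [Hh.counit_comul_right' u, Hh.counit_comul_right' v]
  rfl


/-- `ff (u ⊗ v) = S(v) S(u)` -/
def ff : H ⊗[k] H →ₗ[k] H :=
  Hh.mm.comp ((TensorProduct.map Hh.antipode Hh.antipode).comp
    (TensorProduct.comm k H H).toLinearMap)

@[simp] lemma ff_tmul (u v : H) :
    Hh.ff (u ⊗ₜ[k] v) = Hh.mul (Hh.antipode v) (Hh.antipode u) := rfl

lemma mm_EE2_left (L : H ⊗[k] H →ₗ[k] H) :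
    Hh.mm.comp (TensorProduct.map Hh.EE2 L)
      = (Hh.aut.toLinearMap.comp L).comp
          ((TensorProduct.lid k (H ⊗[k] H)).toLinearMap.comp
            (TensorProduct.map Hh.ee2 LinearMap.id)) := by
  apply TensorProduct.ext'
  intro c c'
  simp only [LinearMap.comp_apply, TensorProduct.map_tmul, mm_tmul, EE2,
    LinearMap.toSpanSingleton_apply, LinearMap.id_coe, id_eq, LinearEquiv.coe_coe,
    TensorProduct.lid_tmul, map_smul]
  rw [LinearMap.smul_apply, Hh.one_mul]

lemma mm_EE2_right (L : H ⊗[k] H →ₗ[k] H) :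
    Hh.mm.comp (TensorProduct.map L Hh.EE2)
      = (Hh.aut.toLinearMap.comp L).comp
          ((TensorProduct.rid k (H ⊗[k] H)).toLinearMap.comp
            (TensorProduct.map LinearMap.id Hh.ee2)) := by
  apply TensorProduct.ext'
  intro c c'
  simp only [LinearMap.comp_apply, TensorProduct.map_tmul, mm_tmul, EE2,
    LinearMap.toSpanSingleton_apply, LinearMap.id_coe, id_eq, LinearEquiv.coe_coe,
    TensorProduct.rid_tmul, map_smul]
  rw [Hh.mul_one]

/-- `m ∘ (m ⊗ S∘m) ∘ Δ₂ = ηε₂` -/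
lemma convC_right :
    Hh.mm.comp ((TensorProduct.map Hh.mm (Hh.antipode.comp Hh.mm)).comp Hh.comul2)
      = Hh.EE2 := by
  apply LinearMap.ext
  intro c
  simp only [LinearMap.comp_apply]
  have e1 : TensorProduct.map Hh.mm (Hh.antipode.comp Hh.mm) (Hh.comul2 c)
      = TensorProduct.map LinearMap.id Hh.antipode
          (TensorProduct.map Hh.mm Hh.mm (Hh.comul2 c)) := by
    rw [tpmm, LinearMap.id_comp]
  rw [e1, show TensorProduct.map Hh.mm Hh.mm (Hh.comul2 c) = Hh.comul (Hh.mm c) from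
    (LinearMap.congr_fun Hh.comul_mm c).symm]
  rw [show Hh.mm (TensorProduct.map LinearMap.id Hh.antipode (Hh.comul (Hh.mm c)))
    = Hh.ee (Hh.mm c) from LinearMap.congr_fun Hh.conv_right (Hh.mm c)]
  exact LinearMap.congr_fun Hh.ee_mm c

/-- pointwise rearrangement `(ab)(cd) = α(a)(α⁻¹(bc)d)` -/
lemma four_assoc (a b c d : H) :
    Hh.mul (Hh.mul a b) (Hh.mul c d)
      = Hh.mul (Hh.aut a) (Hh.mul (Hh.aut.symm (Hh.mul b c)) d) := by
  have inner : Hh.mul b (Hh.mul (Hh.aut.symm c) (Hh.aut.symm d))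
      = Hh.mul (Hh.aut.symm (Hh.mul b c)) d := by
    conv_lhs => rw [← Hh.aut.apply_symm_apply b]
    rw [Hh.hom_assoc, Hh.aut.apply_symm_apply, ← Hh.aut_symm_mul]
  conv_lhs => rw [← Hh.aut.apply_symm_apply (Hh.mul c d)]
  rw [← Hh.hom_assoc, Hh.aut_symm_mul, inner]

/-- `m ∘ (ff ⊗ m) ∘ Δ₂ = ηε₂` -/
lemma convC_left :
    Hh.mm.comp ((TensorProduct.map Hh.ff Hh.mm).comp Hh.comul2) = Hh.EE2 := by
  set K' : H ⊗[k] H →ₗ[k] H := Hh.mm.comp (TensorProduct.map Hh.antipode LinearMap.id)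
    with hK'
  set Xi : H ⊗[k] (H ⊗[k] H) →ₗ[k] H :=
    Hh.mm.comp ((TensorProduct.map (Hh.aut.toLinearMap.comp Hh.antipode)
      (Hh.mm.comp (TensorProduct.map Hh.aut.symm.toLinearMap LinearMap.id))).comp
        (TensorProduct.leftComm k H H H).toLinearMap) with hXi
  have PL2 : Hh.mm.comp ((TensorProduct.map Hh.ff Hh.mm).comp
      (TensorProduct.tensorTensorTensorComm k H H H H).toLinearMap)
      = Xi.comp (TensorProduct.map K' LinearMap.id) := by
    apply TensorProduct.ext_fourfold'
    intro u1 u2 v1 v2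
    simp only [LinearMap.comp_apply, LinearEquiv.coe_coe,
      TensorProduct.tensorTensorTensorComm_tmul, TensorProduct.map_tmul, ff_tmul, mm_tmul,
      hXi, hK', TensorProduct.leftComm_tmul, LinearMap.id_coe, id_eq]
    exact Hh.four_assoc _ _ _ _
  have PL3 : Xi.comp ((TensorProduct.mk k H (H ⊗[k] H)) Hh.one)
      = Hh.aut.toLinearMap.comp K' := by
    apply TensorProduct.ext'
    intro v1 v2
    simp only [LinearMap.comp_apply, TensorProduct.mk_apply, hXi, hK',
      LinearEquiv.coe_coe, TensorProduct.leftComm_tmul, TensorProduct.map_tmul,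
      mm_tmul, LinearMap.id_coe, id_eq]
    rw [Hh.aut_symm_one, Hh.one_mul, ← Hh.aut_mul]
  apply TensorProduct.ext'
  intro u v
  simp only [LinearMap.comp_apply, comul2_tmul]
  rw [show Hh.mm (TensorProduct.map Hh.ff Hh.mm
      ((TensorProduct.tensorTensorTensorComm k H H H H).toLinearMap
        (Hh.comul u ⊗ₜ[k] Hh.comul v)))
    = (Xi.comp (TensorProduct.map K' LinearMap.id)) (Hh.comul u ⊗ₜ[k] Hh.comul v) from
      LinearMap.congr_fun PL2 (Hh.comul u ⊗ₜ[k] Hh.comul v)]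
  simp only [LinearMap.comp_apply, TensorProduct.map_tmul, LinearMap.id_coe, id_eq]
  rw [show K' (Hh.comul u) = Hh.counit u • Hh.one from Hh.antipode_convolution u]
  rw [← TensorProduct.smul_tmul', map_smul]
  rw [show Xi (Hh.one ⊗ₜ[k] Hh.comul v)
    = (Xi.comp ((TensorProduct.mk k H (H ⊗[k] H)) Hh.one)) (Hh.comul v) from rfl]
  rw [PL3]
  simp only [LinearMap.comp_apply]
  rw [show K' (Hh.comul v) = Hh.counit v • Hh.one from Hh.antipode_convolution v]
  simp only [map_smul, Hh.aut_one, LinearEquiv.coe_coe, EE2_tmul, smul_smul, mul_comm]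


/-- the interleaving map `(H⊗(H⊗H))⊗(H⊗(H⊗H)) → (H⊗H)⊗((H⊗H)⊗(H⊗H))` -/
def psi6 : (H ⊗[k] (H ⊗[k] H)) ⊗[k] (H ⊗[k] (H ⊗[k] H)) →ₗ[k]
    (H ⊗[k] H) ⊗[k] ((H ⊗[k] H) ⊗[k] (H ⊗[k] H)) :=
  (TensorProduct.map LinearMap.id
      (TensorProduct.tensorTensorTensorComm k H H H H).toLinearMap).comp
    (TensorProduct.tensorTensorTensorComm k H (H ⊗[k] H) H (H ⊗[k] H)).toLinearMap

lemma PLL : (TensorProduct.map Hh.gamS Hh.comul2).comp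
      (TensorProduct.tensorTensorTensorComm k H H H H).toLinearMap
    = psi6.comp (TensorProduct.map (TensorProduct.map Hh.aut.symm.toLinearMap Hh.comul)
        (TensorProduct.map Hh.aut.symm.toLinearMap Hh.comul)) := by
  apply TensorProduct.ext_fourfold'
  intro a b c d
  simp only [LinearMap.comp_apply, LinearEquiv.coe_coe,
    TensorProduct.tensorTensorTensorComm_tmul, TensorProduct.map_tmul, gamS_tmul,
    comul2_tmul, ttc4_tmul, psi6, LinearMap.id_coe, id_eq]

lemma PLR : ((TensorProduct.assoc k (H ⊗[k] H) (H ⊗[k] H) (H ⊗[k] H)).toLinearMap.comp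
      ((TensorProduct.map Hh.comul2 Hh.gam).comp
        (TensorProduct.tensorTensorTensorComm k H H H H).toLinearMap))
    = psi6.comp (TensorProduct.map
        ((TensorProduct.assoc k H H H).toLinearMap.comp
          (TensorProduct.map Hh.comul Hh.aut.toLinearMap))
        ((TensorProduct.assoc k H H H).toLinearMap.comp
          (TensorProduct.map Hh.comul Hh.aut.toLinearMap))) := by
  apply TensorProduct.ext_fourfold'
  intro a b c d
  simp only [LinearMap.comp_apply, LinearEquiv.coe_coe,
    TensorProduct.tensorTensorTensorComm_tmul, TensorProduct.map_tmul, gam_tmul,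
    comul2_tmul, ttc4_tmul, psi6, LinearMap.id_coe, id_eq]
  generalize Hh.comul a = x
  generalize Hh.comul c = y
  induction x using TensorProduct.induction_on with
  | zero => simp
  | tmul p q =>
    induction y using TensorProduct.induction_on with
    | zero => simp [TensorProduct.tmul_zero, TensorProduct.zero_tmul]
    | tmul r s =>
      simp [TensorProduct.tensorTensorTensorComm_tmul, TensorProduct.assoc_tmul]
    | add y y' hy hy' =>
      simp only [TensorProduct.tmul_add, TensorProduct.add_tmul, map_add, hy, hy']
  | add x x' hx hx' =>
    simp only [TensorProduct.tmul_add, TensorProduct.add_tmul, map_add, hx, hx']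

/-- Hom-coassociativity of `Δ₂` -/
lemma comul2_coassoc (c : H ⊗[k] H) :
    TensorProduct.map Hh.gamS Hh.comul2 (Hh.comul2 c)
      = TensorProduct.assoc k (H ⊗[k] H) (H ⊗[k] H) (H ⊗[k] H)
          (TensorProduct.map Hh.comul2 Hh.gam (Hh.comul2 c)) := by
  have main : (TensorProduct.map Hh.gamS Hh.comul2).comp Hh.comul2
      = ((TensorProduct.assoc k (H ⊗[k] H) (H ⊗[k] H) (H ⊗[k] H)).toLinearMap.comp
          ((TensorProduct.map Hh.comul2 Hh.gam).comp Hh.comul2)) := by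
    apply TensorProduct.ext'
    intro u v
    have l1 : ((TensorProduct.map Hh.gamS Hh.comul2).comp Hh.comul2) (u ⊗ₜ[k] v)
        = ((TensorProduct.map Hh.gamS Hh.comul2).comp
            (TensorProduct.tensorTensorTensorComm k H H H H).toLinearMap)
              (Hh.comul u ⊗ₜ[k] Hh.comul v) := rfl
    have l2 : (((TensorProduct.assoc k (H ⊗[k] H) (H ⊗[k] H)
        (H ⊗[k] H)).toLinearMap.comp
          ((TensorProduct.map Hh.comul2 Hh.gam).comp Hh.comul2))) (u ⊗ₜ[k] v)
        = (((TensorProduct.assoc k (H ⊗[k] H) (H ⊗[k] H) (H ⊗[k] H)).toLinearMap.comp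
            ((TensorProduct.map Hh.comul2 Hh.gam).comp
              (TensorProduct.tensorTensorTensorComm k H H H H).toLinearMap)))
                (Hh.comul u ⊗ₜ[k] Hh.comul v) := rfl
    rw [l1, l2, Hh.PLL]
    rw [show ((TensorProduct.assoc k (H ⊗[k] H) (H ⊗[k] H) (H ⊗[k] H)).toLinearMap.comp
        ((TensorProduct.map Hh.comul2 Hh.gam).comp
          (TensorProduct.tensorTensorTensorComm k H H H H).toLinearMap))
      = _ from Hh.PLR]
    simp only [LinearMap.comp_apply, TensorProduct.map_tmul]
    rw [Hh.hom_coassoc u, Hh.hom_coassoc v]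
    rfl
  exact LinearMap.congr_fun main c

/-- rearranged Hom-coassociativity of `Δ₂` -/
lemma coassoc2' (c : H ⊗[k] H) :
    TensorProduct.map LinearMap.id Hh.comul2 (Hh.comul2 c)
      = TensorProduct.map Hh.gam LinearMap.id
          (TensorProduct.assoc k (H ⊗[k] H) (H ⊗[k] H) (H ⊗[k] H)
            (TensorProduct.map Hh.comul2 Hh.gam (Hh.comul2 c))) := by
  rw [← Hh.comul2_coassoc c, tpmm]
  have e1 : Hh.gam.comp Hh.gamS = LinearMap.id := LinearMap.ext Hh.gam_gamS
  rw [e1, LinearMap.id_comp]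

lemma ff_gam : Hh.ff.comp Hh.gam = Hh.aut.toLinearMap.comp Hh.ff := by
  apply TensorProduct.ext'
  intro p q
  simp only [LinearMap.comp_apply, gam_tmul, ff_tmul, LinearEquiv.coe_coe]
  rw [Hh.antipode_aut, Hh.antipode_aut, ← Hh.aut_mul]

lemma aut_EE2 : Hh.aut.toLinearMap.comp Hh.EE2 = Hh.EE2 :=
  LinearMap.ext fun c => by simp [EE2, Hh.aut_one]

/-- THE ANTIPODE IS ANTI-MULTIPLICATIVE -/
theorem antipode_mul (u v : H) :
    Hh.antipode (Hh.mul u v) = Hh.mul (Hh.antipode v) (Hh.antipode u) := by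
  set α := Hh.aut with hα
  set S := Hh.antipode with hS
  set W : H ⊗[k] H →ₗ[k] H :=
    Hh.mm.comp ((TensorProduct.map Hh.mm (S.comp Hh.mm)).comp Hh.comul2) with hW
  set P : H ⊗[k] H →ₗ[k] H :=
    Hh.mm.comp ((TensorProduct.map (α.toLinearMap.comp Hh.ff)
      (α.toLinearMap.comp W)).comp Hh.comul2) with hP
  have route1 : ∀ c, P c = α (α (Hh.ff (Hh.gamS c))) := by
    intro c
    have h1 : P c = (Hh.mm.comp (TensorProduct.map (α.toLinearMap.comp Hh.ff) Hh.EE2))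
        (Hh.comul2 c) := by
      rw [hP, hW, Hh.convC_right]
      simp only [LinearMap.comp_apply]
      rw [show α.toLinearMap.comp Hh.EE2 = Hh.EE2 from Hh.aut_EE2]
    rw [h1, Hh.mm_EE2_right]
    simp only [LinearMap.comp_apply, LinearEquiv.coe_coe]
    rw [show (TensorProduct.rid k (H ⊗[k] H))
        (TensorProduct.map LinearMap.id Hh.ee2 (Hh.comul2 c)) = Hh.gamS c from
      LinearMap.congr_fun Hh.ee2_comul2_right c]
  have route2 : ∀ c, P c = α (α (α (S (Hh.mm c)))) := by
    intro c
    set Q₀ : (H ⊗[k] H) ⊗[k] ((H ⊗[k] H) ⊗[k] (H ⊗[k] H)) →ₗ[k] H :=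
      Hh.mm.comp (TensorProduct.map (α.toLinearMap.comp Hh.ff)
        (α.toLinearMap.comp (Hh.mm.comp (TensorProduct.map Hh.mm (S.comp Hh.mm)))))
      with hQ₀
    have step1 : P c = Q₀ (TensorProduct.map LinearMap.id Hh.comul2 (Hh.comul2 c)) := by
      rw [hP, hQ₀]
      simp only [LinearMap.comp_apply]
      rw [tpmm]
      have e1 : (α.toLinearMap.comp Hh.ff).comp LinearMap.id = α.toLinearMap.comp Hh.ff :=
        LinearMap.comp_id _
      have e2 : (α.toLinearMap.comp (Hh.mm.comp (TensorProduct.map Hh.mm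
          (S.comp Hh.mm)))).comp Hh.comul2 = α.toLinearMap.comp W := by
        rw [hW]; exact LinearMap.ext fun z => rfl
      rw [e1, e2]
    rw [step1, Hh.coassoc2' c]
    set Q₂ : ((H ⊗[k] H) ⊗[k] (H ⊗[k] H)) ⊗[k] (H ⊗[k] H) →ₗ[k] H :=
      Hh.mm.comp (TensorProduct.map
        (α.toLinearMap.comp (Hh.mm.comp (TensorProduct.map Hh.ff Hh.mm)))
        ((α.toLinearMap.comp α.toLinearMap).comp (S.comp Hh.mm))) with hQ₂
    have step3 : (Q₀.comp (TensorProduct.map Hh.gam LinearMap.id)).comp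
        (TensorProduct.assoc k (H ⊗[k] H) (H ⊗[k] H) (H ⊗[k] H)).toLinearMap = Q₂ := by
      apply TensorProduct.ext_threefold
      intro x y z
      simp only [LinearMap.comp_apply, LinearEquiv.coe_coe, TensorProduct.assoc_tmul,
        TensorProduct.map_tmul, hQ₀, hQ₂, mm_tmul, LinearMap.id_coe, id_eq]
      rw [show Hh.ff (Hh.gam x) = α (Hh.ff x) from LinearMap.congr_fun Hh.ff_gam x]
      rw [Hh.aut_mul, Hh.hom_assoc, ← Hh.aut_mul]
    have step3' : Q₀ (TensorProduct.map Hh.gam LinearMap.id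
        ((TensorProduct.assoc k (H ⊗[k] H) (H ⊗[k] H) (H ⊗[k] H))
          (TensorProduct.map Hh.comul2 Hh.gam (Hh.comul2 c))))
        = Q₂ (TensorProduct.map Hh.comul2 Hh.gam (Hh.comul2 c)) := by
      rw [← step3]; rfl
    rw [step3']
    have hconv : (α.toLinearMap.comp
        (Hh.mm.comp (TensorProduct.map Hh.ff Hh.mm))).comp Hh.comul2 = Hh.EE2 := by
      have h2 : (α.toLinearMap.comp (Hh.mm.comp (TensorProduct.map Hh.ff Hh.mm))).comp
          Hh.comul2 = α.toLinearMap.comp (Hh.mm.comp ((TensorProduct.map Hh.ff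
            Hh.mm).comp Hh.comul2)) := LinearMap.ext fun z => rfl
      rw [h2, Hh.convC_left, Hh.aut_EE2]
    have step4 : Q₂ (TensorProduct.map Hh.comul2 Hh.gam (Hh.comul2 c))
        = (Hh.mm.comp (TensorProduct.map Hh.EE2
            (((α.toLinearMap.comp α.toLinearMap).comp (S.comp Hh.mm)).comp Hh.gam)))
            (Hh.comul2 c) := by
      rw [hQ₂]
      simp only [LinearMap.comp_apply]
      rw [tpmm, hconv]
    rw [step4, Hh.mm_EE2_left]
    simp only [LinearMap.comp_apply, LinearEquiv.coe_coe]
    rw [show (TensorProduct.lid k (H ⊗[k] H))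
        (TensorProduct.map Hh.ee2 LinearMap.id (Hh.comul2 c)) = Hh.gamS c from
      LinearMap.congr_fun Hh.ee2_comul2_left c]
    rw [Hh.gam_gamS c]
  have key : ∀ c, Hh.ff (Hh.gamS c) = α (S (Hh.mm c)) := by
    intro c
    have := (route1 c).symm.trans (route2 c)
    exact α.injective (α.injective this)
  have := key (Hh.gam (u ⊗ₜ[k] v))
  rw [Hh.gamS_gam] at this
  rw [show Hh.ff (u ⊗ₜ[k] v) = Hh.mul (S v) (S u) from rfl] at this
  rw [this]
  simp only [gam_tmul, mm_tmul]
  rw [← Hh.aut_mul, Hh.antipode_aut, Hh.aut_aut_antipode]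


section SinvMul

variable {Sinv : H →ₗ[k] H}

lemma sinv_mul (hS₁ : ∀ h, Hh.antipode (Sinv h) = h) (hS₂ : ∀ h, Sinv (Hh.antipode h) = h)
    (u v : H) : Sinv (Hh.mul u v) = Hh.mul (Sinv v) (Sinv u) := by
  apply Hh.antipode_inj hS₂
  rw [hS₁, Hh.antipode_mul, hS₁, hS₁]

/-- `Σ x₂ · S⁻¹(x₁) = ε(x) 1` -/
lemma conv5 (hS₁ : ∀ h, Hh.antipode (Sinv h) = h) (hS₂ : ∀ h, Sinv (Hh.antipode h) = h)
    (x : H) :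
    Hh.mm (TensorProduct.map LinearMap.id Sinv (TensorProduct.comm k H H (Hh.comul x)))
      = Hh.counit x • Hh.one := by
  apply Hh.antipode_inj hS₂
  have E : Hh.antipode.comp (Hh.mm.comp ((TensorProduct.map LinearMap.id Sinv).comp
      (TensorProduct.comm k H H).toLinearMap))
      = Hh.mm.comp (TensorProduct.map LinearMap.id Hh.antipode) := by
    apply TensorProduct.ext'
    intro a b
    simp only [LinearMap.comp_apply, LinearEquiv.coe_coe, TensorProduct.comm_tmul,
      TensorProduct.map_tmul, mm_tmul, LinearMap.id_coe, id_eq]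
    rw [Hh.antipode_mul, hS₁]
  have h1 := LinearMap.congr_fun E (Hh.comul x)
  simp only [LinearMap.comp_apply, LinearEquiv.coe_coe] at h1
  rw [h1, show Hh.mm (TensorProduct.map LinearMap.id Hh.antipode (Hh.comul x))
    = Hh.counit x • Hh.one from Hh.convolution_antipode x]
  rw [map_smul, Hh.antipode_one]

/-- `Σ S⁻¹(x₂) · x₁ = ε(x) 1` -/
lemma conv6 (hS₁ : ∀ h, Hh.antipode (Sinv h) = h) (hS₂ : ∀ h, Sinv (Hh.antipode h) = h)
    (x : H) :
    Hh.mm (TensorProduct.map Sinv LinearMap.id (TensorProduct.comm k H H (Hh.comul x)))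
      = Hh.counit x • Hh.one := by
  apply Hh.antipode_inj hS₂
  have E : Hh.antipode.comp (Hh.mm.comp ((TensorProduct.map Sinv LinearMap.id).comp
      (TensorProduct.comm k H H).toLinearMap))
      = Hh.mm.comp (TensorProduct.map Hh.antipode LinearMap.id) := by
    apply TensorProduct.ext'
    intro a b
    simp only [LinearMap.comp_apply, LinearEquiv.coe_coe, TensorProduct.comm_tmul,
      TensorProduct.map_tmul, mm_tmul, LinearMap.id_coe, id_eq]
    rw [Hh.antipode_mul, hS₁]
  have h1 := LinearMap.congr_fun E (Hh.comul x)
  simp only [LinearMap.comp_apply, LinearEquiv.coe_coe] at h1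
  rw [h1, show Hh.mm (TensorProduct.map Hh.antipode LinearMap.id (Hh.comul x))
    = Hh.counit x • Hh.one from Hh.antipode_convolution x]
  rw [map_smul, Hh.antipode_one]

end SinvMul

/-! #### Anti-comultiplicativity of the antipode -/

/-- `f4 h = S(h₂) ⊗ S(h₁)` -/
def f4 : H →ₗ[k] H ⊗[k] H :=
  (TensorProduct.comm k H H).toLinearMap.comp
    ((TensorProduct.map Hh.antipode Hh.antipode).comp Hh.comul)

lemma f4_apply (h : H) :
    Hh.f4 h = TensorProduct.comm k H H
      (TensorProduct.map Hh.antipode Hh.antipode (Hh.comul h)) := rfl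

lemma f4_aut : Hh.f4.comp Hh.aut.toLinearMap = Hh.gam.comp Hh.f4 := by
  apply LinearMap.ext
  intro h
  simp only [LinearMap.comp_apply, f4_apply, LinearEquiv.coe_coe]
  rw [Hh.comul_aut h, tpmm]
  have eSα : Hh.antipode.comp Hh.aut.toLinearMap = Hh.aut.toLinearMap.comp Hh.antipode :=
    LinearMap.ext fun z => Hh.antipode_aut z
  rw [eSα, ← tpmm, comm_map]
  rfl

lemma gam_EE4 : Hh.gam.comp Hh.EE4 = Hh.EE4 := by
  apply LinearMap.ext; intro h
  simp only [LinearMap.comp_apply, EE4_apply, map_smul, Hh.gam_one2]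

lemma mm2_EE4_left (L : H →ₗ[k] H ⊗[k] H) :
    Hh.mm2.comp (TensorProduct.map Hh.EE4 L)
      = (Hh.gam.comp L).comp
          ((TensorProduct.lid k H).toLinearMap.comp
            (TensorProduct.map Hh.counit LinearMap.id)) := by
  apply TensorProduct.ext'
  intro u v
  simp only [LinearMap.comp_apply, TensorProduct.map_tmul, EE4_apply, mm2_tmul,
    LinearMap.id_coe, id_eq, LinearEquiv.coe_coe, TensorProduct.lid_tmul, map_smul]
  rw [LinearMap.smul_apply, Hh.one2_mul2]

lemma mm2_EE4_right (L : H →ₗ[k] H ⊗[k] H) :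
    Hh.mm2.comp (TensorProduct.map L Hh.EE4)
      = (Hh.gam.comp L).comp
          ((TensorProduct.rid k H).toLinearMap.comp
            (TensorProduct.map LinearMap.id Hh.counit)) := by
  apply TensorProduct.ext'
  intro u v
  simp only [LinearMap.comp_apply, TensorProduct.map_tmul, EE4_apply, mm2_tmul,
    LinearMap.id_coe, id_eq, LinearEquiv.coe_coe, TensorProduct.rid_tmul, map_smul]
  rw [Hh.mul2_one2]

/-- `Σ Δ(h₁) ·₂ Δ(S h₂) = ε(h) (1 ⊗ 1)` -/
lemma conv4_right :
    Hh.mm2.comp ((TensorProduct.map Hh.comul (Hh.comul.comp Hh.antipode)).comp Hh.comul)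
      = Hh.EE4 := by
  have mm2ΔΔ : Hh.mm2.comp (TensorProduct.map Hh.comul Hh.comul)
      = Hh.comul.comp Hh.mm := by
    apply TensorProduct.ext'
    intro u v
    simp only [LinearMap.comp_apply, TensorProduct.map_tmul, mm2_tmul, mm_tmul]
    exact (Hh.comul_mul u v).symm
  apply LinearMap.ext
  intro h
  simp only [LinearMap.comp_apply]
  have e1 : TensorProduct.map Hh.comul (Hh.comul.comp Hh.antipode) (Hh.comul h)
      = TensorProduct.map Hh.comul Hh.comul
          (TensorProduct.map LinearMap.id Hh.antipode (Hh.comul h)) := by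
    rw [tpmm, LinearMap.comp_id]
  rw [e1, show Hh.mm2 (TensorProduct.map Hh.comul Hh.comul
      (TensorProduct.map LinearMap.id Hh.antipode (Hh.comul h)))
    = Hh.comul (Hh.mm (TensorProduct.map LinearMap.id Hh.antipode (Hh.comul h))) from
      LinearMap.congr_fun mm2ΔΔ _]
  rw [show Hh.mm (TensorProduct.map LinearMap.id Hh.antipode (Hh.comul h))
    = Hh.counit h • Hh.one from Hh.convolution_antipode h]
  simp only [map_smul, Hh.comul_one, EE4_apply, one2]


/-- `Σ f4(h₁) ·₂ Δ(h₂) = ε(h) (1 ⊗ 1)` (needs `α² = id`) -/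
lemma conv4_left (hii : ∀ x, Hh.aut (Hh.aut x) = x) :
    Hh.mm2.comp ((TensorProduct.map Hh.f4 Hh.comul).comp Hh.comul) = Hh.EE4 := by
  set α := Hh.aut with hα
  set S := Hh.antipode with hS
  set K' : H ⊗[k] H →ₗ[k] H := Hh.mm.comp (TensorProduct.map S LinearMap.id) with hK'
  set N : (H ⊗[k] H) ⊗[k] (H ⊗[k] H) →ₗ[k] H ⊗[k] H :=
    (TensorProduct.map K' K').comp
      ((TensorProduct.tensorTensorTensorComm k H H H H).toLinearMap.comp
        (TensorProduct.map (TensorProduct.comm k H H).toLinearMap LinearMap.id)) with hN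
  have N_pure : ∀ p q r s : H, N ((p ⊗ₜ[k] q) ⊗ₜ[k] (r ⊗ₜ[k] s))
      = Hh.mul (S q) r ⊗ₜ[k] Hh.mul (S p) s := by
    intro p q r s
    simp [hN, hK', TensorProduct.tensorTensorTensorComm_tmul]
  have S1 : Hh.mm2.comp (TensorProduct.map Hh.f4 Hh.comul) = N.comp
      (TensorProduct.map Hh.comul Hh.comul) := by
    have aux : ∀ x y : H ⊗[k] H,
        Hh.mul2 (TensorProduct.comm k H H (TensorProduct.map S S x)) y = N (x ⊗ₜ[k] y) := by
      intro x y
      induction x using TensorProduct.induction_on with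
      | zero => simp
      | tmul p q =>
        induction y using TensorProduct.induction_on with
        | zero => simp
        | tmul r s => rw [N_pure]; simp
        | add y y' h1 h2 => simp only [TensorProduct.tmul_add, map_add, h1, h2]
      | add x x' h1 h2 =>
        simp only [TensorProduct.add_tmul, map_add, LinearMap.add_apply, h1, h2]
    apply TensorProduct.ext'
    intro u v
    simp only [LinearMap.comp_apply, TensorProduct.map_tmul, mm2_tmul]
    rw [show Hh.f4 u = TensorProduct.comm k H H (TensorProduct.map S S (Hh.comul u))
      from rfl, aux]
  apply LinearMap.ext
  intro h
  simp only [LinearMap.comp_apply]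
  rw [show Hh.mm2 (TensorProduct.map Hh.f4 Hh.comul (Hh.comul h))
    = N (TensorProduct.map Hh.comul Hh.comul (Hh.comul h)) from
      LinearMap.congr_fun S1 (Hh.comul h)]
  -- split Δ ⊗ Δ and use coassociativity on the first factor
  have step1 : TensorProduct.map Hh.comul Hh.comul (Hh.comul h)
      = TensorProduct.map LinearMap.id Hh.comul
          (TensorProduct.map Hh.comul LinearMap.id (Hh.comul h)) := by
    rw [tpmm, LinearMap.id_comp, LinearMap.comp_id]
  have step2 : TensorProduct.map Hh.comul LinearMap.id (Hh.comul h)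
      = TensorProduct.map LinearMap.id α.symm.toLinearMap
          ((TensorProduct.assoc k H H H).symm
            (TensorProduct.map α.symm.toLinearMap Hh.comul (Hh.comul h))) := by
    rw [Hh.hom_coassoc h, LinearEquiv.symm_apply_apply, tpmm]
    have e : α.symm.toLinearMap.comp α.toLinearMap = LinearMap.id := by
      apply LinearMap.ext; intro z; simp
    rw [e, LinearMap.id_comp]
  rw [step1, step2]
  rw [show TensorProduct.map LinearMap.id Hh.comul
      (TensorProduct.map LinearMap.id α.symm.toLinearMap
        ((TensorProduct.assoc k H H H).symm
          (TensorProduct.map α.symm.toLinearMap Hh.comul (Hh.comul h))))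
    = TensorProduct.map LinearMap.id (Hh.comul.comp α.symm.toLinearMap)
        ((TensorProduct.assoc k H H H).symm
          (TensorProduct.map α.symm.toLinearMap Hh.comul (Hh.comul h))) by
    rw [tpmm, LinearMap.id_comp]]
  -- PL4c : push through the associator
  have PL4c : (TensorProduct.map (LinearMap.id : H ⊗[k] H →ₗ[k] H ⊗[k] H)
      (Hh.comul.comp α.symm.toLinearMap)).comp
        (TensorProduct.assoc k H H H).symm.toLinearMap
      = ((TensorProduct.assoc k H H (H ⊗[k] H)).symm.toLinearMap).comp
          (TensorProduct.map LinearMap.id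
            (TensorProduct.map LinearMap.id (Hh.comul.comp α.symm.toLinearMap))) := by
    apply TensorProduct.ext'
    intro x w
    induction w using TensorProduct.induction_on with
    | zero => simp [TensorProduct.tmul_zero]
    | tmul y z =>
      simp [TensorProduct.assoc_symm_tmul]
    | add w w' h1 h2 =>
      simp only [TensorProduct.tmul_add, map_add, h1, h2]
  rw [show TensorProduct.map LinearMap.id (Hh.comul.comp α.symm.toLinearMap)
      ((TensorProduct.assoc k H H H).symm
        (TensorProduct.map α.symm.toLinearMap Hh.comul (Hh.comul h)))
    = (TensorProduct.assoc k H H (H ⊗[k] H)).symm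
        (TensorProduct.map LinearMap.id
          (TensorProduct.map LinearMap.id (Hh.comul.comp α.symm.toLinearMap))
            (TensorProduct.map α.symm.toLinearMap Hh.comul (Hh.comul h))) from
      LinearMap.congr_fun PL4c _]
  rw [show TensorProduct.map LinearMap.id
      (TensorProduct.map LinearMap.id (Hh.comul.comp α.symm.toLinearMap))
        (TensorProduct.map α.symm.toLinearMap Hh.comul (Hh.comul h))
    = TensorProduct.map α.symm.toLinearMap
        ((TensorProduct.map LinearMap.id (Hh.comul.comp α.symm.toLinearMap)).comp Hh.comul)
          (Hh.comul h) by rw [tpmm, LinearMap.id_comp]]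
  -- identify G
  set G : H →ₗ[k] H ⊗[k] (H ⊗[k] H) :=
    (TensorProduct.map LinearMap.id (Hh.comul.comp α.symm.toLinearMap)).comp Hh.comul
    with hG
  have hGid : G = (TensorProduct.assoc k H H H).toLinearMap.comp
      ((TensorProduct.map Hh.comul α.toLinearMap).comp
        (Hh.comul.comp α.symm.toLinearMap)) := by
    apply LinearMap.ext
    intro w
    simp only [hG, LinearMap.comp_apply, LinearEquiv.coe_coe]
    have chainB : TensorProduct.map LinearMap.id α.symm.toLinearMap (Hh.comul w)
        = TensorProduct.map α.toLinearMap LinearMap.id (Hh.comul (α.symm w)) := by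
      rw [Hh.comul_aut_symm w, gamS, tpmm]
      have e1 : α.toLinearMap.comp α.symm.toLinearMap = LinearMap.id := by
        apply LinearMap.ext; intro z; simp
      rw [e1, LinearMap.id_comp]
    have sp : TensorProduct.map LinearMap.id (Hh.comul.comp α.symm.toLinearMap)
        (Hh.comul w) = TensorProduct.map LinearMap.id Hh.comul
          (TensorProduct.map LinearMap.id α.symm.toLinearMap (Hh.comul w)) := by
      rw [tpmm, LinearMap.id_comp]
    rw [sp, chainB]
    rw [show TensorProduct.map LinearMap.id Hh.comul
        (TensorProduct.map α.toLinearMap LinearMap.id (Hh.comul (α.symm w)))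
      = TensorProduct.map α.toLinearMap LinearMap.id
          (TensorProduct.map LinearMap.id Hh.comul (Hh.comul (α.symm w))) by
      rw [tpmm, tpmm, LinearMap.id_comp, LinearMap.comp_id, LinearMap.id_comp,
        LinearMap.comp_id]]
    rw [Hh.coassoc' (α.symm w), tpmm]
    have e2 : α.toLinearMap.comp α.toLinearMap = LinearMap.id := by
      apply LinearMap.ext; intro z; exact hii z
    rw [e2, LinearMap.id_comp]
    simp
    rfl
  rw [hGid]
  -- peel off : N ∘ assoc⁻¹ and the inner assoc ∘ (Δ ⊗ α)
  set N4 : H ⊗[k] (H ⊗[k] (H ⊗[k] H)) →ₗ[k] H ⊗[k] H :=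
    N.comp (TensorProduct.assoc k H H (H ⊗[k] H)).symm.toLinearMap with hN4
  set N7 : H ⊗[k] (H ⊗[k] H) →ₗ[k] H ⊗[k] H :=
    (TensorProduct.map LinearMap.id K').comp (TensorProduct.leftComm k H H H).toLinearMap
    with hN7
  set Z : H ⊗[k] (H ⊗[k] H) := TensorProduct.map α.symm.toLinearMap
    (Hh.comul.comp α.symm.toLinearMap) (Hh.comul h) with hZ
  have t1 : TensorProduct.map α.symm.toLinearMap
      ((TensorProduct.assoc k H H H).toLinearMap.comp
        ((TensorProduct.map Hh.comul α.toLinearMap).comp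
          (Hh.comul.comp α.symm.toLinearMap))) (Hh.comul h)
      = TensorProduct.map LinearMap.id
          ((TensorProduct.assoc k H H H).toLinearMap.comp
            (TensorProduct.map Hh.comul α.toLinearMap)) Z := by
    rw [hZ, tpmm, LinearMap.id_comp, LinearMap.comp_assoc]
  rw [t1]
  have PL4e : N4.comp (TensorProduct.map (LinearMap.id : H →ₗ[k] H)
      ((TensorProduct.assoc k H H H).toLinearMap.comp
        (TensorProduct.map Hh.comul α.toLinearMap)))
      = N7.comp (TensorProduct.map LinearMap.id
          (TensorProduct.map (K'.comp Hh.comul) α.toLinearMap)) := by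
    apply TensorProduct.ext'
    intro a w
    induction w using TensorProduct.induction_on with
    | zero => simp [TensorProduct.tmul_zero]
    | tmul b c =>
      simp only [LinearMap.comp_apply, TensorProduct.map_tmul, LinearMap.id_coe, id_eq,
        LinearEquiv.coe_coe]
      generalize Hh.comul b = t
      induction t using TensorProduct.induction_on with
      | zero => simp [hN4, TensorProduct.zero_tmul, TensorProduct.tmul_zero, hN7]
      | tmul p q =>
        simp only [TensorProduct.assoc_tmul, hN4, LinearMap.comp_apply,
          LinearEquiv.coe_coe, TensorProduct.assoc_symm_tmul, hN7,
          TensorProduct.leftComm_tmul, TensorProduct.map_tmul, LinearMap.id_coe, id_eq]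
        rw [N_pure]
        simp [hK']
      | add t t' h1 h2 =>
        simp only [TensorProduct.add_tmul, TensorProduct.tmul_add, map_add, h1, h2]
    | add w w' h1 h2 =>
      simp only [TensorProduct.tmul_add, map_add, h1, h2]
  rw [show N ((TensorProduct.assoc k H H (H ⊗[k] H)).symm
      (TensorProduct.map LinearMap.id
        ((TensorProduct.assoc k H H H).toLinearMap.comp
          (TensorProduct.map Hh.comul α.toLinearMap)) Z))
    = N7 (TensorProduct.map LinearMap.id
        (TensorProduct.map (K'.comp Hh.comul) α.toLinearMap) Z) from
      LinearMap.congr_fun PL4e Z]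
  have hKΔ : K'.comp Hh.comul = Hh.ee := by
    rw [hK', LinearMap.comp_assoc]; exact Hh.conv_left
  rw [hKΔ]
  have EL : (TensorProduct.map Hh.ee α.toLinearMap).comp Hh.comul
      = (TensorProduct.mk k H H) Hh.one := by
    apply LinearMap.ext; intro w
    simp only [LinearMap.comp_apply]
    have sp : TensorProduct.map Hh.ee α.toLinearMap (Hh.comul w)
        = TensorProduct.map (LinearMap.toSpanSingleton k H Hh.one) α.toLinearMap
            (TensorProduct.map Hh.counit LinearMap.id (Hh.comul w)) := by
      rw [tpmm, LinearMap.comp_id]; rfl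
    rw [sp, Hh.counit_map_comul w]
    simp [TensorProduct.mk_apply]
    rw [show α (Hh.aut.symm w) = w from α.apply_symm_apply w]
  have t4 : TensorProduct.map LinearMap.id
      (TensorProduct.map Hh.ee α.toLinearMap) Z
      = TensorProduct.map α.symm.toLinearMap
          (((TensorProduct.mk k H H) Hh.one).comp α.symm.toLinearMap) (Hh.comul h) := by
    rw [hZ, tpmm, LinearMap.id_comp, ← LinearMap.comp_assoc, EL]
  rw [t4]
  have Fin1 : N7.comp (TensorProduct.map α.symm.toLinearMap
      (((TensorProduct.mk k H H) Hh.one).comp α.symm.toLinearMap))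
      = ((TensorProduct.mk k H H) Hh.one).comp
          (Hh.mm.comp (TensorProduct.map (S.comp α.symm.toLinearMap)
            α.symm.toLinearMap)) := by
    apply TensorProduct.ext'
    intro u v
    simp only [LinearMap.comp_apply, TensorProduct.map_tmul, TensorProduct.mk_apply,
      hN7, hK', LinearEquiv.coe_coe, TensorProduct.leftComm_tmul, LinearMap.id_coe,
      id_eq, mm_tmul]
  rw [show N7 (TensorProduct.map α.symm.toLinearMap
      (((TensorProduct.mk k H H) Hh.one).comp α.symm.toLinearMap) (Hh.comul h))
    = ((TensorProduct.mk k H H) Hh.one)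
        (Hh.mm (TensorProduct.map (S.comp α.symm.toLinearMap) α.symm.toLinearMap
          (Hh.comul h))) from LinearMap.congr_fun Fin1 (Hh.comul h)]
  have t5 : TensorProduct.map (S.comp α.symm.toLinearMap) α.symm.toLinearMap (Hh.comul h)
      = TensorProduct.map S LinearMap.id (Hh.comul (α.symm h)) := by
    rw [show TensorProduct.map (S.comp α.symm.toLinearMap) α.symm.toLinearMap (Hh.comul h)
      = TensorProduct.map S LinearMap.id
          (TensorProduct.map α.symm.toLinearMap α.symm.toLinearMap (Hh.comul h)) by
      rw [tpmm, LinearMap.id_comp]]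
    rw [show TensorProduct.map α.symm.toLinearMap α.symm.toLinearMap (Hh.comul h)
      = Hh.gamS (Hh.comul h) from rfl, ← Hh.comul_aut_symm h]
  rw [t5, show Hh.mm (TensorProduct.map S LinearMap.id (Hh.comul (α.symm h)))
    = Hh.counit (α.symm h) • Hh.one from Hh.antipode_convolution _]
  rw [Hh.counit_aut_symm]
  simp [TensorProduct.mk_apply, EE4_apply, one2, TensorProduct.tmul_smul]


/-- THE ANTIPODE IS ANTI-COMULTIPLICATIVE (needs `α² = id`) -/
theorem antipode_comul (hii : ∀ x, Hh.aut (Hh.aut x) = x) (h : H) :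
    Hh.comul (Hh.antipode h)
      = TensorProduct.comm k H H
          (TensorProduct.map Hh.antipode Hh.antipode (Hh.comul h)) := by
  set α := Hh.aut with hα
  set S := Hh.antipode with hS
  set W4 : H →ₗ[k] H ⊗[k] H :=
    Hh.mm2.comp ((TensorProduct.map Hh.comul (Hh.comul.comp S)).comp Hh.comul) with hW4
  set P : H →ₗ[k] H ⊗[k] H :=
    Hh.mm2.comp ((TensorProduct.map (Hh.gam.comp Hh.f4) (Hh.gam.comp W4)).comp Hh.comul)
    with hP
  have gamgam : ∀ x, Hh.gam (Hh.gam x) = x := by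
    intro x
    rw [gam, tpmm]
    have e : α.toLinearMap.comp α.toLinearMap = LinearMap.id :=
      LinearMap.ext fun z => hii z
    rw [e]
    simp
  have route1 : ∀ x, P x = Hh.gam (Hh.gam (Hh.f4 (α.symm x))) := by
    intro x
    have h1 : P x = (Hh.mm2.comp (TensorProduct.map (Hh.gam.comp Hh.f4) Hh.EE4))
        (Hh.comul x) := by
      rw [hP, hW4, Hh.conv4_right]
      simp only [LinearMap.comp_apply]
      rw [show Hh.gam.comp Hh.EE4 = Hh.EE4 from Hh.gam_EE4]
    rw [h1, Hh.mm2_EE4_right]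
    simp only [LinearMap.comp_apply, LinearEquiv.coe_coe]
    rw [Hh.counit_comul_right x]
  have route2 : ∀ x, P x = Hh.gam (Hh.comul (S x)) := by
    intro x
    set Q₀ : H ⊗[k] (H ⊗[k] H) →ₗ[k] H ⊗[k] H :=
      Hh.mm2.comp (TensorProduct.map (Hh.gam.comp Hh.f4)
        (Hh.gam.comp (Hh.mm2.comp (TensorProduct.map Hh.comul (Hh.comul.comp S)))))
      with hQ₀
    have step1 : P x = Q₀ (TensorProduct.map LinearMap.id Hh.comul (Hh.comul x)) := by
      rw [hP, hQ₀]
      simp only [LinearMap.comp_apply]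
      rw [tpmm]
      have e1 : (Hh.gam.comp Hh.f4).comp LinearMap.id = Hh.gam.comp Hh.f4 :=
        LinearMap.comp_id _
      have e2 : (Hh.gam.comp (Hh.mm2.comp (TensorProduct.map Hh.comul
          (Hh.comul.comp S)))).comp Hh.comul = Hh.gam.comp W4 := by
        rw [hW4]; exact LinearMap.ext fun z => rfl
      rw [e1, e2]
    rw [step1, Hh.coassoc' x]
    set Q₂ : (H ⊗[k] H) ⊗[k] H →ₗ[k] H ⊗[k] H :=
      Hh.mm2.comp (TensorProduct.map
        (Hh.gam.comp (Hh.mm2.comp (TensorProduct.map Hh.f4 Hh.comul)))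
        ((Hh.gam.comp Hh.gam).comp (Hh.comul.comp S))) with hQ₂
    have step3 : (Q₀.comp (TensorProduct.map α.toLinearMap LinearMap.id)).comp
        (TensorProduct.assoc k H H H).toLinearMap = Q₂ := by
      apply TensorProduct.ext_threefold
      intro u v w
      simp only [LinearMap.comp_apply, LinearEquiv.coe_coe, TensorProduct.assoc_tmul,
        TensorProduct.map_tmul, hQ₀, hQ₂, mm2_tmul, LinearMap.id_coe, id_eq]
      rw [show Hh.f4 (α u) = Hh.gam (Hh.f4 u) from LinearMap.congr_fun Hh.f4_aut u]
      rw [Hh.gam_mul2, Hh.hom_assoc2, ← Hh.gam_mul2]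
    have step3' : Q₀ (TensorProduct.map α.toLinearMap LinearMap.id
        ((TensorProduct.assoc k H H H)
          (TensorProduct.map Hh.comul α.toLinearMap (Hh.comul x))))
        = Q₂ (TensorProduct.map Hh.comul α.toLinearMap (Hh.comul x)) := by
      rw [← step3]; rfl
    rw [step3']
    have hconv : (Hh.gam.comp
        (Hh.mm2.comp (TensorProduct.map Hh.f4 Hh.comul))).comp Hh.comul = Hh.EE4 := by
      have h2 : (Hh.gam.comp (Hh.mm2.comp (TensorProduct.map Hh.f4 Hh.comul))).comp
          Hh.comul = Hh.gam.comp (Hh.mm2.comp ((TensorProduct.map Hh.f4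
            Hh.comul).comp Hh.comul)) := LinearMap.ext fun z => rfl
      rw [h2, Hh.conv4_left hii, Hh.gam_EE4]
    have step4 : Q₂ (TensorProduct.map Hh.comul α.toLinearMap (Hh.comul x))
        = (Hh.mm2.comp (TensorProduct.map Hh.EE4
            (((Hh.gam.comp Hh.gam).comp (Hh.comul.comp S)).comp α.toLinearMap)))
            (Hh.comul x) := by
      rw [hQ₂]
      simp only [LinearMap.comp_apply]
      rw [tpmm, hconv]
    rw [step4, Hh.mm2_EE4_left]
    simp only [LinearMap.comp_apply, LinearEquiv.coe_coe]
    rw [Hh.counit_comul_left x]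
    rw [show α (α.symm x) = x from α.apply_symm_apply x]
    rw [gamgam]
  have key := (route1 h).symm.trans (route2 h)
  have key3 : Hh.gam (Hh.f4 (α.symm h)) = Hh.comul (S h) := by
    have h5 := congrArg Hh.gamS key
    rwa [Hh.gamS_gam, Hh.gamS_gam] at h5
  have t : Hh.gam (Hh.f4 (α.symm h)) = Hh.f4 h := by
    have e1 : Hh.f4 (α.symm h) = Hh.gamS (Hh.f4 h) := by
      have := LinearMap.congr_fun Hh.f4_aut (α.symm h)
      simp only [LinearMap.comp_apply, LinearEquiv.coe_coe,
        α.apply_symm_apply] at this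
      have := congrArg Hh.gamS this
      rw [Hh.gamS_gam] at this
      rw [show Hh.aut (α.symm h) = h from α.apply_symm_apply h] at this
      exact this.symm
    rw [e1, Hh.gam_gamS]
  rw [← key3, t]
  rfl

section SinvComul

variable {Sinv : H →ₗ[k] H}

lemma sinv_comul (hii : ∀ x, Hh.aut (Hh.aut x) = x)
    (hS₁ : ∀ h, Hh.antipode (Sinv h) = h) (hS₂ : ∀ h, Sinv (Hh.antipode h) = h) (x : H) :
    Hh.comul (Sinv x)
      = TensorProduct.comm k H H (TensorProduct.map Sinv Sinv (Hh.comul x)) := by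
  have h1 := Hh.antipode_comul hii (Sinv x)
  rw [hS₁] at h1
  have cc : ∀ y : H ⊗[k] H, TensorProduct.comm k H H (TensorProduct.comm k H H y) = y := by
    intro y
    induction y using TensorProduct.induction_on with
    | zero => simp
    | tmul a b => simp
    | add a b ha hb => simp [map_add, ha, hb]
  have h2 := congrArg (fun t => TensorProduct.map Sinv Sinv (TensorProduct.comm k H H t)) h1
  rw [cc, tpmm] at h2
  have e : Sinv.comp Hh.antipode = LinearMap.id := LinearMap.ext hS₂
  rw [e] at h2
  simp only [TensorProduct.map_id, LinearMap.id_coe, id_eq] at h2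
  rw [comm_map, ← h2]

end SinvComul


section MoreHelpers

variable {Sinv : H →ₗ[k] H}

lemma aut_symm_eq (hii : ∀ x, Hh.aut (Hh.aut x) = x) (x : H) :
    Hh.aut.symm x = Hh.aut x := by
  apply Hh.aut.injective
  rw [Hh.aut.apply_symm_apply, hii]

lemma sinv_aut_symm (hS₁ : ∀ h, Hh.antipode (Sinv h) = h)
    (hS₂ : ∀ h, Sinv (Hh.antipode h) = h) (x : H) :
    Sinv (Hh.aut.symm x) = Hh.aut.symm (Sinv x) := by
  apply Hh.aut.injective
  rw [← Hh.sinv_aut hS₁ hS₂, Hh.aut.apply_symm_apply, Hh.aut.apply_symm_apply]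

lemma map_ee_aut_comul :
    (TensorProduct.map Hh.ee Hh.aut.toLinearMap).comp Hh.comul
      = (TensorProduct.mk k H H) Hh.one := by
  apply LinearMap.ext; intro w
  simp only [LinearMap.comp_apply]
  have sp : TensorProduct.map Hh.ee Hh.aut.toLinearMap (Hh.comul w)
      = TensorProduct.map (LinearMap.toSpanSingleton k H Hh.one) Hh.aut.toLinearMap
          (TensorProduct.map Hh.counit LinearMap.id (Hh.comul w)) := by
    rw [tpmm, LinearMap.comp_id]; rfl
  rw [sp, Hh.counit_map_comul w]
  simp [TensorProduct.mk_apply]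

end MoreHelpers

end HomHopfAlgebra

section Aside

open HomHopfAlgebra

variable (Hh : HomHopfAlgebra k H) (AA : HomComoduleAlgebra k Hh A)
variable (Φ : TotalIntegral k Hh AA) (Sinv : H →ₗ[k] H)

/-- the candidate normalized integral, `θ(g ⊗ h) = φ(h S⁻¹(g))` -/
def thetaMap : H ⊗[k] H →ₗ[k] A :=
  Φ.toFun.comp (TensorProduct.lift (Hh.mul.flip.comp Sinv))

@[simp] lemma thetaMap_tmul (g h : H) :
    thetaMap Hh AA Φ Sinv (g ⊗ₜ[k] h) = Φ.toFun (Hh.mul h (Sinv g)) := rfl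

variable {Sinv}
variable (hS₁ : ∀ h, Hh.antipode (Sinv h) = h) (hS₂ : ∀ h, Sinv (Hh.antipode h) = h)

/-- the commutes condition -/
lemma theta_commutes (hS₁ : ∀ h, Hh.antipode (Sinv h) = h)
    (hS₂ : ∀ h, Sinv (Hh.antipode h) = h) (x : H ⊗[k] H) :
    thetaMap Hh AA Φ Sinv (TensorProduct.map Hh.aut.toLinearMap Hh.aut.toLinearMap x)
      = AA.aut (thetaMap Hh AA Φ Sinv x) := by
  have E : (thetaMap Hh AA Φ Sinv).comp
      (TensorProduct.map Hh.aut.toLinearMap Hh.aut.toLinearMap)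
      = AA.aut.toLinearMap.comp (thetaMap Hh AA Φ Sinv) := by
    apply TensorProduct.ext'
    intro g h
    simp only [LinearMap.comp_apply, TensorProduct.map_tmul, thetaMap_tmul,
      LinearEquiv.coe_coe]
    rw [Hh.sinv_aut hS₁ hS₂, ← Hh.aut_mul, Φ.commutes]
  exact LinearMap.congr_fun E x

/-- condition (ii) -/
lemma theta_cond2 (hS₁ : ∀ h, Hh.antipode (Sinv h) = h)
    (hS₂ : ∀ h, Sinv (Hh.antipode h) = h) (h : H) :
    thetaMap Hh AA Φ Sinv (Hh.comul h) = Hh.counit h • AA.one := by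
  have E : TensorProduct.lift (Hh.mul.flip.comp Sinv)
      = Hh.mm.comp ((TensorProduct.map LinearMap.id Sinv).comp
          (TensorProduct.comm k H H).toLinearMap) := by
    apply TensorProduct.ext'
    intro u v
    simp [mm]
  rw [show thetaMap Hh AA Φ Sinv (Hh.comul h)
    = Φ.toFun (TensorProduct.lift (Hh.mul.flip.comp Sinv) (Hh.comul h)) from rfl, E]
  simp only [LinearMap.comp_apply, LinearEquiv.coe_coe]
  rw [Hh.conv5 hS₁ hS₂ h, map_smul, Φ.normal]

/-- condition (iii) -/
lemma theta_cond3 (hii : ∀ x, Hh.aut (Hh.aut x) = x)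
    (hS₁ : ∀ h, Hh.antipode (Sinv h) = h) (hS₂ : ∀ h, Sinv (Hh.antipode h) = h)
    (hcentral : ∀ (x : H) (a : A), AA.mul (Φ.toFun x) a = AA.mul a (Φ.toFun x))
    (g h : H) (a : A) :
    TensorProduct.lift AA.mul
      (TensorProduct.map (AA.aut.toLinearMap.comp AA.aut.toLinearMap)
          ((thetaMap Hh AA Φ Sinv).comp
            (TensorProduct.map (Hh.mul (Hh.aut.symm g)) (Hh.mul (Hh.aut.symm h))))
        (TensorProduct.assoc k A H H
          (TensorProduct.map AA.coact Hh.aut.symm.toLinearMap (AA.coact a))))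
      = AA.mul (thetaMap Hh AA Φ Sinv (g ⊗ₜ[k] h)) a := by
  set θ := thetaMap Hh AA Φ Sinv with hθ
  set T := TensorProduct.lift (Hh.mul.flip.comp Sinv) with hT
  set c₀ : A := Φ.toFun (Hh.mul h (Sinv g)) with hc₀
  -- step 1 : comodule coassociativity
  rw [AA.hom_coassoc a]
  rw [tpmm]
  have e1 : (AA.aut.toLinearMap.comp AA.aut.toLinearMap).comp AA.aut.symm.toLinearMap
      = AA.aut.toLinearMap := by
    apply LinearMap.ext; intro x; simp
  rw [e1]
  -- step 2 : the second component collapses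
  have E1 : T.comp (TensorProduct.map (Hh.mul (Hh.aut.symm g)) (Hh.mul (Hh.aut.symm h)))
      = ((Hh.mul h).comp ((Hh.mul.flip (Hh.aut.symm (Sinv g))).comp
          (Hh.aut.symm.toLinearMap.comp (Hh.mm.comp ((TensorProduct.map LinearMap.id
            Sinv).comp (TensorProduct.comm k H H).toLinearMap))))) := by
    apply TensorProduct.ext'
    intro u v
    simp only [LinearMap.comp_apply, TensorProduct.map_tmul, LinearEquiv.coe_coe,
      TensorProduct.comm_tmul, LinearMap.id_coe, id_eq, mm_tmul, hT,
      TensorProduct.lift.tmul, LinearMap.flip_apply]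
    rw [Hh.sinv_mul hS₁ hS₂, Hh.sinv_aut_symm hS₁ hS₂, Hh.four_assoc,
      Hh.aut.apply_symm_apply]
  have hC : (θ.comp (TensorProduct.map (Hh.mul (Hh.aut.symm g))
      (Hh.mul (Hh.aut.symm h)))).comp Hh.comul
      = (LinearMap.toSpanSingleton k A c₀).comp Hh.counit := by
    apply LinearMap.ext; intro x
    simp only [LinearMap.comp_apply]
    have e3 := LinearMap.congr_fun E1 (Hh.comul x)
    simp only [LinearMap.comp_apply, LinearEquiv.coe_coe] at e3
    rw [show θ ((TensorProduct.map (Hh.mul (Hh.aut.symm g))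
        (Hh.mul (Hh.aut.symm h))) (Hh.comul x))
      = Φ.toFun (T ((TensorProduct.map (Hh.mul (Hh.aut.symm g))
          (Hh.mul (Hh.aut.symm h))) (Hh.comul x))) from rfl, e3]
    rw [Hh.conv5 hS₁ hS₂ x]
    simp only [map_smul, LinearMap.smul_apply, LinearMap.flip_apply]
    rw [Hh.aut_symm_one]
    rw [show (Hh.mul Hh.one) (Hh.aut.symm (Sinv g)) = Hh.aut (Hh.aut.symm (Sinv g)) from
      Hh.one_mul _, Hh.aut.apply_symm_apply]
    simp [hc₀, LinearMap.toSpanSingleton_apply]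
  rw [show TensorProduct.map AA.aut.toLinearMap
      ((θ.comp (TensorProduct.map (Hh.mul (Hh.aut.symm g))
        (Hh.mul (Hh.aut.symm h)))).comp Hh.comul) (AA.coact a)
    = TensorProduct.map AA.aut.toLinearMap
        ((LinearMap.toSpanSingleton k A c₀).comp Hh.counit) (AA.coact a) by rw [hC]]
  -- step 3 : counit property of the coaction
  have E2 : (TensorProduct.lift AA.mul).comp (TensorProduct.map AA.aut.toLinearMap
      ((LinearMap.toSpanSingleton k A c₀).comp Hh.counit))
      = ((AA.mul.flip c₀).comp AA.aut.toLinearMap).comp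
          ((TensorProduct.rid k A).toLinearMap.comp
            (TensorProduct.map LinearMap.id Hh.counit)) := by
    apply TensorProduct.ext'
    intro a' x'
    simp only [LinearMap.comp_apply, TensorProduct.map_tmul, LinearEquiv.coe_coe,
      TensorProduct.lift.tmul, LinearMap.toSpanSingleton_apply, map_smul,
      TensorProduct.rid_tmul, LinearMap.flip_apply, LinearMap.id_coe, id_eq,
      LinearMap.smul_apply]
  rw [show TensorProduct.lift AA.mul (TensorProduct.map AA.aut.toLinearMap
      ((LinearMap.toSpanSingleton k A c₀).comp Hh.counit) (AA.coact a))
    = ((AA.mul.flip c₀).comp AA.aut.toLinearMap)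
        ((TensorProduct.rid k A).toLinearMap
          (TensorProduct.map LinearMap.id Hh.counit (AA.coact a))) from
      LinearMap.congr_fun E2 (AA.coact a)]
  rw [show (TensorProduct.rid k A).toLinearMap
      (TensorProduct.map LinearMap.id Hh.counit (AA.coact a)) = AA.aut.symm a from
    AA.counit_coact a]
  simp only [LinearMap.comp_apply, LinearEquiv.coe_coe, LinearMap.flip_apply]
  rw [AA.aut.apply_symm_apply]
  exact (hcentral (Hh.mul h (Sinv g)) a).symm


/-- condition (i) -/
lemma theta_cond1 (hii : ∀ x, Hh.aut (Hh.aut x) = x)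
    (hS₁ : ∀ h, Hh.antipode (Sinv h) = h) (hS₂ : ∀ h, Sinv (Hh.antipode h) = h)
    (hcocomm : ∀ g h : H,
      TensorProduct.map (Hh.mul g) LinearMap.id
          ((TensorProduct.comm k A H) (AA.coact (Φ.toFun h)))
        = TensorProduct.map (Hh.mul.flip g) LinearMap.id
          ((TensorProduct.comm k A H) (AA.coact (Φ.toFun h))))
    (g h : H) :
    TensorProduct.map (thetaMap Hh AA Φ Sinv) Hh.aut.toLinearMap
        ((TensorProduct.assoc k H H H).symm (Hh.aut.symm g ⊗ₜ[k] Hh.comul h))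
      = TensorProduct.lift
          ((TensorProduct.homTensorHomMap (RingHom.id k) A H A H).comp
            (((TensorProduct.mk k (A →ₗ[k] A) (H →ₗ[k] H)) AA.aut.toLinearMap).comp
              Hh.mul))
          (TensorProduct.map LinearMap.id
            (AA.coact.comp ((thetaMap Hh AA Φ Sinv).comp
              ((TensorProduct.mk k H H).flip (Hh.aut.symm h))))
            (Hh.comul g)) := by
  set θ := thetaMap Hh AA Φ Sinv with hθ
  set α := Hh.aut with hα
  set β := AA.aut with hβ
  set S := Hh.antipode with hS
  -- the left-hand side
  set Lg : H →ₗ[k] A := Φ.toFun.comp (Hh.mul.flip (Sinv (α.symm g))) with hLg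
  have LHSeq : TensorProduct.map θ α.toLinearMap
      ((TensorProduct.assoc k H H H).symm (α.symm g ⊗ₜ[k] Hh.comul h))
      = TensorProduct.map Lg α.toLinearMap (Hh.comul h) := by
    have L1 : ((TensorProduct.map θ α.toLinearMap).comp
        ((TensorProduct.assoc k H H H).symm.toLinearMap.comp
          ((TensorProduct.mk k H (H ⊗[k] H)) (α.symm g))))
        = TensorProduct.map Lg α.toLinearMap := by
      apply TensorProduct.ext'
      intro p q
      simp only [LinearMap.comp_apply, TensorProduct.mk_apply, LinearEquiv.coe_coe,
        TensorProduct.assoc_symm_tmul, TensorProduct.map_tmul, hθ, thetaMap_tmul, hLg,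
        LinearMap.flip_apply]
    exact LinearMap.congr_fun L1 (Hh.comul h)
  rw [LHSeq]
  -- abbreviations for the right-hand side
  set R₁ : H ⊗[k] (A ⊗[k] H) →ₗ[k] A ⊗[k] H := TensorProduct.lift
    ((TensorProduct.homTensorHomMap (RingHom.id k) A H A H).comp
      (((TensorProduct.mk k (A →ₗ[k] A) (H →ₗ[k] H)) β.toLinearMap).comp Hh.mul))
    with hR₁
  have R₁_pure : ∀ (g' : H) (a : A) (x : H),
      R₁ (g' ⊗ₜ[k] (a ⊗ₜ[k] x)) = β a ⊗ₜ[k] Hh.mul g' x := by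
    intro g' a x
    simp [hR₁, TensorProduct.homTensorHomMap_apply]
  set W : H →ₗ[k] H := (Hh.mul (α.symm h)).comp Sinv with hW
  set X : H →ₗ[k] A ⊗[k] H := AA.coact.comp (θ.comp
    ((TensorProduct.mk k H H).flip (α.symm h))) with hX
  have hXW : X = (TensorProduct.map Φ.toFun LinearMap.id).comp (Hh.comul.comp W) := by
    apply LinearMap.ext; intro y
    simp only [hX, LinearMap.comp_apply, TensorProduct.mk_apply, LinearMap.flip_apply,
      hθ, thetaMap_tmul, hW]
    exact Φ.colinear _
  -- the two sides of the cocommutativity trick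
  set Θ₁ : H ⊗[k] (H ⊗[k] H) →ₗ[k] A ⊗[k] H :=
    (TensorProduct.map (Φ.toFun.comp α.toLinearMap) Hh.mm).comp
      (TensorProduct.leftComm k H H H).toLinearMap with hΘ₁
  set Θ₂ : H ⊗[k] (H ⊗[k] H) →ₗ[k] A ⊗[k] H :=
    (TensorProduct.map (Φ.toFun.comp α.toLinearMap)
      (Hh.mm.comp (TensorProduct.comm k H H).toLinearMap)).comp
      (TensorProduct.leftComm k H H H).toLinearMap with hΘ₂
  have Θ₁_pure : ∀ (g' p q : H), Θ₁ (g' ⊗ₜ[k] (p ⊗ₜ[k] q))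
      = Φ.toFun (α p) ⊗ₜ[k] Hh.mul g' q := by
    intro g' p q
    simp [hΘ₁, TensorProduct.leftComm_tmul]
  have Θ₂_pure : ∀ (g' p q : H), Θ₂ (g' ⊗ₜ[k] (p ⊗ₜ[k] q))
      = Φ.toFun (α p) ⊗ₜ[k] Hh.mul q g' := by
    intro g' p q
    simp [hΘ₂, TensorProduct.leftComm_tmul]
  have P3 : R₁.comp (TensorProduct.map LinearMap.id
      (TensorProduct.map Φ.toFun LinearMap.id)) = Θ₁ := by
    apply TensorProduct.ext'
    intro g' t
    induction t using TensorProduct.induction_on with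
    | zero => simp [TensorProduct.tmul_zero]
    | tmul p q =>
      simp only [LinearMap.comp_apply, TensorProduct.map_tmul, LinearMap.id_coe, id_eq]
      rw [R₁_pure, Θ₁_pure, Φ.commutes]
    | add t t' h1 h2 => simp only [TensorProduct.tmul_add, map_add, h1, h2]
  have P1 : ∀ (g' : H) (t : H ⊗[k] H), Θ₁ (g' ⊗ₜ[k] t)
      = TensorProduct.comm k H A ((TensorProduct.map LinearMap.id β.toLinearMap)
          ((TensorProduct.map (Hh.mul g') LinearMap.id)
            ((TensorProduct.comm k A H) ((TensorProduct.map Φ.toFun LinearMap.id) t)))) := by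
    intro g' t
    induction t using TensorProduct.induction_on with
    | zero => simp [TensorProduct.tmul_zero]
    | tmul p q =>
      simp only [TensorProduct.map_tmul, LinearMap.id_coe, id_eq, LinearEquiv.coe_coe,
        TensorProduct.comm_tmul]
      rw [Θ₁_pure, Φ.commutes]
    | add t t' h1 h2 => simp only [TensorProduct.tmul_add, map_add, h1, h2]
  have P2 : ∀ (g' : H) (t : H ⊗[k] H), Θ₂ (g' ⊗ₜ[k] t)
      = TensorProduct.comm k H A ((TensorProduct.map LinearMap.id β.toLinearMap)
          ((TensorProduct.map (Hh.mul.flip g') LinearMap.id)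
            ((TensorProduct.comm k A H) ((TensorProduct.map Φ.toFun LinearMap.id) t)))) := by
    intro g' t
    induction t using TensorProduct.induction_on with
    | zero => simp [TensorProduct.tmul_zero]
    | tmul p q =>
      simp only [TensorProduct.map_tmul, LinearMap.id_coe, id_eq, LinearEquiv.coe_coe,
        TensorProduct.comm_tmul, LinearMap.flip_apply]
      rw [Θ₂_pure, Φ.commutes]
    | add t t' h1 h2 => simp only [TensorProduct.tmul_add, map_add, h1, h2]
  have Cstar : Θ₁.comp (TensorProduct.map LinearMap.id Hh.comul)
      = Θ₂.comp (TensorProduct.map LinearMap.id Hh.comul) := by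
    apply TensorProduct.ext'
    intro g' w
    simp only [LinearMap.comp_apply, TensorProduct.map_tmul, LinearMap.id_coe, id_eq]
    rw [P1 g' (Hh.comul w), P2 g' (Hh.comul w), ← Φ.colinear w, hcocomm g' w]
  -- rewrite the right-hand side
  have RHS1 : R₁ (TensorProduct.map LinearMap.id X (Hh.comul g))
      = Θ₁ (TensorProduct.map LinearMap.id (Hh.comul.comp W) (Hh.comul g)) := by
    rw [hXW]
    rw [show TensorProduct.map LinearMap.id ((TensorProduct.map Φ.toFun
        LinearMap.id).comp (Hh.comul.comp W)) (Hh.comul g)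
      = TensorProduct.map LinearMap.id (TensorProduct.map Φ.toFun LinearMap.id)
          (TensorProduct.map LinearMap.id (Hh.comul.comp W) (Hh.comul g)) by
      rw [tpmm, LinearMap.id_comp]]
    exact LinearMap.congr_fun P3 _
  rw [RHS1]
  -- apply the cocommutativity hypothesis
  rw [show TensorProduct.map LinearMap.id (Hh.comul.comp W) (Hh.comul g)
    = TensorProduct.map LinearMap.id Hh.comul
        (TensorProduct.map LinearMap.id W (Hh.comul g)) by
    rw [tpmm, LinearMap.id_comp]]
  rw [show Θ₁ (TensorProduct.map LinearMap.id Hh.comul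
      (TensorProduct.map LinearMap.id W (Hh.comul g)))
    = Θ₂ (TensorProduct.map LinearMap.id Hh.comul
        (TensorProduct.map LinearMap.id W (Hh.comul g))) from
      LinearMap.congr_fun Cstar _]
  rw [show TensorProduct.map LinearMap.id Hh.comul
      (TensorProduct.map LinearMap.id W (Hh.comul g))
    = TensorProduct.map LinearMap.id (Hh.comul.comp W) (Hh.comul g) by
    rw [tpmm, LinearMap.id_comp]]
  -- expand Δ ∘ W
  set V : H →ₗ[k] H ⊗[k] H := (TensorProduct.comm k H H).toLinearMap.comp
    ((TensorProduct.map Sinv Sinv).comp Hh.comul) with hV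
  set D0 : H ⊗[k] H := Hh.comul (α.symm h) with hD0
  have hΔW : Hh.comul.comp W = (Hh.mul2 D0).comp V := by
    apply LinearMap.ext; intro y
    simp only [LinearMap.comp_apply, hW, hV, hD0, LinearEquiv.coe_coe]
    rw [Hh.comul_mul, Hh.sinv_comul hii hS₁ hS₂]
    rfl
  rw [hΔW]
  rw [show TensorProduct.map LinearMap.id ((Hh.mul2 D0).comp V) (Hh.comul g)
    = TensorProduct.map LinearMap.id (Hh.mul2 D0)
        (TensorProduct.map LinearMap.id V (Hh.comul g)) by
    rw [tpmm, LinearMap.id_comp]]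
  -- use coassociativity on g
  have hVsplit : TensorProduct.map LinearMap.id V (Hh.comul g)
      = TensorProduct.map α.toLinearMap
          ((TensorProduct.comm k H H).toLinearMap.comp (TensorProduct.map Sinv Sinv))
          ((TensorProduct.assoc k H H H)
            (TensorProduct.map Hh.comul α.toLinearMap (Hh.comul g))) := by
    have E' : TensorProduct.map (LinearMap.id : H →ₗ[k] H) V
        = (TensorProduct.map LinearMap.id
            ((TensorProduct.comm k H H).toLinearMap.comp
              (TensorProduct.map Sinv Sinv))).comp
            (TensorProduct.map LinearMap.id Hh.comul) := by
      apply TensorProduct.ext'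
      intro u v
      simp [hV]
    rw [E', LinearMap.comp_apply, Hh.coassoc' g, tpmm, LinearMap.comp_id,
      LinearMap.id_comp]
  rw [hVsplit]
  -- CLAIM A : reassociate and collapse
  set VC : H ⊗[k] H →ₗ[k] H := Hh.mm.comp ((TensorProduct.map Sinv LinearMap.id).comp
    (TensorProduct.comm k H H).toLinearMap) with hVC
  set ι₁ : H →ₗ[k] H ⊗[k] H := (TensorProduct.mk k H H).flip Hh.one with hι₁
  set Θ₈ : H ⊗[k] H →ₗ[k] A ⊗[k] H := Θ₂.comp (TensorProduct.map LinearMap.id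
    ((Hh.mul2 D0).comp (ι₁.comp Sinv))) with hΘ₈
  have claimA : ((Θ₂.comp (TensorProduct.map LinearMap.id (Hh.mul2 D0))).comp
      (TensorProduct.map α.toLinearMap
        ((TensorProduct.comm k H H).toLinearMap.comp
          (TensorProduct.map Sinv Sinv)))).comp
      (TensorProduct.assoc k H H H).toLinearMap
      = Θ₈.comp (TensorProduct.map VC LinearMap.id) := by
    apply TensorProduct.ext_threefold
    intro x y z
    simp only [LinearMap.comp_apply, LinearEquiv.coe_coe, TensorProduct.assoc_tmul,
      TensorProduct.map_tmul, TensorProduct.comm_tmul, LinearMap.id_coe, id_eq,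
      hΘ₈, hVC, hι₁, mm_tmul, TensorProduct.mk_apply, LinearMap.flip_apply]
    generalize D0 = t
    induction t using TensorProduct.induction_on with
    | zero => simp
    | tmul p q =>
      rw [Hh.mul2_tmul, Hh.mul2_tmul, Θ₂_pure, Θ₂_pure, Hh.mul_one, Hh.hom_assoc]
    | add t t' h1 h2 =>
      simp only [map_add, LinearMap.add_apply, TensorProduct.tmul_add, h1, h2]
  rw [show Θ₂ (TensorProduct.map LinearMap.id (Hh.mul2 D0)
      (TensorProduct.map α.toLinearMap
        ((TensorProduct.comm k H H).toLinearMap.comp (TensorProduct.map Sinv Sinv))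
        ((TensorProduct.assoc k H H H)
          (TensorProduct.map Hh.comul α.toLinearMap (Hh.comul g)))))
    = Θ₈ (TensorProduct.map VC LinearMap.id
        (TensorProduct.map Hh.comul α.toLinearMap (Hh.comul g))) from
      LinearMap.congr_fun claimA _]
  -- collapse the `g` legs
  have hVCΔ : VC.comp Hh.comul = Hh.ee := by
    apply LinearMap.ext; intro y
    simp only [LinearMap.comp_apply, hVC, LinearEquiv.coe_coe]
    exact Hh.conv6 hS₁ hS₂ y
  rw [show TensorProduct.map VC LinearMap.id
      (TensorProduct.map Hh.comul α.toLinearMap (Hh.comul g))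
    = TensorProduct.map (VC.comp Hh.comul) α.toLinearMap (Hh.comul g) by
    rw [tpmm, LinearMap.id_comp]]
  rw [hVCΔ]
  rw [show TensorProduct.map Hh.ee α.toLinearMap (Hh.comul g)
    = (TensorProduct.mk k H H) Hh.one g from LinearMap.congr_fun Hh.map_ee_aut_comul g]
  -- final evaluation
  have FIN : ∀ t : H ⊗[k] H,
      Θ₂ (Hh.one ⊗ₜ[k] (Hh.mul2 (Hh.gamS t) ((Sinv g) ⊗ₜ[k] Hh.one)))
        = TensorProduct.map Lg α.toLinearMap t := by
    intro t
    induction t using TensorProduct.induction_on with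
    | zero => simp
    | tmul h₁ h₂ =>
      rw [Hh.gamS_tmul, Hh.mul2_tmul, Hh.mul_one, α.apply_symm_apply, Θ₂_pure]
      simp only [TensorProduct.map_tmul, hLg, LinearMap.comp_apply,
        LinearMap.flip_apply]
      rw [Hh.mul_one]
      congr 2
      rw [Hh.aut_mul, α.apply_symm_apply, ← Hh.sinv_aut hS₁ hS₂,
        Hh.aut_symm_eq hii]
    | add t t' h1 h2 =>
      simp only [map_add, LinearMap.add_apply, TensorProduct.tmul_add, h1, h2]
  have final : Θ₈ ((TensorProduct.mk k H H) Hh.one g)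
      = TensorProduct.map Lg α.toLinearMap (Hh.comul h) := by
    rw [hΘ₈]
    simp only [LinearMap.comp_apply, TensorProduct.mk_apply, TensorProduct.map_tmul,
      LinearMap.id_coe, id_eq]
    rw [show D0 = Hh.gamS (Hh.comul h) from Hh.comul_aut_symm h]
    rw [show ι₁ (Sinv g) = (Sinv g) ⊗ₜ[k] Hh.one from rfl]
    exact FIN (Hh.comul h)
  rw [final]

end Aside

end Aux54

section Statements

variable {k : Type v} [CommRing k] {H A : Type u}
  [AddCommGroup H] [Module k H] [AddCommGroup A] [Module k A]

/-- Theorem 5.4: if the antipode `S` is bijective (with inverse `Sinv`),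
`φ : H → A` is a total integral with central image such that
`g φ(h)₍₁₎ ⊗ φ(h)₍₀₎ = φ(h)₍₁₎ g ⊗ φ(h)₍₀₎` for all `g, h ∈ H`, then
`θ(g ⊗ h) = φ(h S⁻¹(g))` is a normalized `(A,β)`-integral. -/
theorem total_integral_gives_normalized_integral
    (Hh : HomHopfAlgebra k H) (AA : HomComoduleAlgebra k Hh A)
    (Sinv : H →ₗ[k] H)
    (hS₁ : ∀ h, Hh.antipode (Sinv h) = h) (hS₂ : ∀ h, Sinv (Hh.antipode h) = h)
    (Φ : TotalIntegral k Hh AA)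
    (hcocomm : ∀ g h : H,
      TensorProduct.map (Hh.mul g) LinearMap.id
          ((TensorProduct.comm k A H) (AA.coact (Φ.toFun h)))
        = TensorProduct.map (Hh.mul.flip g) LinearMap.id
          ((TensorProduct.comm k A H) (AA.coact (Φ.toFun h))))
    (hcentral : ∀ (h : H) (a : A), AA.mul (Φ.toFun h) a = AA.mul a (Φ.toFun h)) :
    ∃ Θ : NormalizedIntegral k Hh AA,
      Θ.θ = Φ.toFun.comp (TensorProduct.lift (Hh.mul.flip.comp Sinv)) := by
  have hii : ∀ x, Hh.aut (Hh.aut x) = x := Hh.aut_aut hS₁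
  refine ⟨⟨thetaMap Hh AA Φ Sinv, ?_, ?_, ?_, ?_⟩, rfl⟩
  · exact theta_commutes Hh AA Φ hS₁ hS₂
  · exact theta_cond1 Hh AA Φ hii hS₁ hS₂ hcocomm
  · exact theta_cond2 Hh AA Φ hS₁ hS₂
  · exact theta_cond3 Hh AA Φ hii hS₁ hS₂ hcentral

end Statements
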